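/- arXiv:1901.01551 — 5 statements merged into one kernel-verified Lean document; each statement's English description precedes it below -/
import Mathlib

section
/- Let d ≥ 2 be an integer and ε > 0. Then for almost all x ∈ [0,1)^d with respect to d-dimensional Lebesgue measure there exists a constant C = C(x, ε) > 0 such that |S_d(x; N)| ≤ C · N^{1/2} (log N)^{3/2 + ε} for every integer N ≥ 2. -/
open MeasureTheory Filter

/-- The Weyl sum `S_d(x; N) = ∑_{n=1}^N e(x_1 n + x_2 n² + … + x_d n^d)`. -/
noncomputable def weylSum (d : ℕ) (x : Fin d → ℝ) (N : ℕ) : ℂ :=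
  ∑ n ∈ Finset.Icc 1 N,
    Complex.exp (2 * (Real.pi : ℂ) * Complex.I *
      ∑ j : Fin d, (x j : ℂ) * (n : ℂ) ^ ((j : ℕ) + 1))


open Finset

noncomputable def ee (d n : ℕ) (x : Fin d → ℝ) : ℂ :=
  Complex.exp (2 * (Real.pi : ℂ) * Complex.I *
      ∑ j : Fin d, (x j : ℂ) * (n : ℂ) ^ ((j : ℕ) + 1))

lemma weylSum_eq (d N : ℕ) (x : Fin d → ℝ) :
    weylSum d x N = ∑ n ∈ Finset.Ioc 0 N, ee d n x := by
  rw [← Finset.Icc_add_one_left_eq_Ioc]; rfl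

lemma cont_ee (d n : ℕ) : Continuous (ee d n) := by
  unfold ee
  exact Complex.continuous_exp.comp (continuous_const.mul (continuous_finset_sum _
    fun j _ => ((Complex.continuous_ofReal.comp (continuous_apply j)).mul continuous_const)))

lemma cont_weylSum (d N : ℕ) : Continuous fun x => weylSum d x N := by
  simp only [weylSum_eq]
  exact continuous_finset_sum _ fun n _ => cont_ee d n

lemma sum_ee_real (d n : ℕ) (x : Fin d → ℝ) :
    (∑ j : Fin d, (x j : ℂ) * (n : ℂ) ^ ((j : ℕ) + 1)) =
      ((∑ j : Fin d, x j * (n : ℝ) ^ ((j : ℕ) + 1) : ℝ) : ℂ) := by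
  push_cast; rfl

lemma abs_ee (d n : ℕ) (x : Fin d → ℝ) : ‖ee d n x‖ = 1 := by
  rw [ee, sum_ee_real]
  rw [show 2 * (Real.pi : ℂ) * Complex.I *
      ((∑ j : Fin d, x j * (n : ℝ) ^ ((j : ℕ) + 1) : ℝ) : ℂ) =
      ((2 * Real.pi * (∑ j : Fin d, x j * (n : ℝ) ^ ((j : ℕ) + 1)) : ℝ) : ℂ) * Complex.I by
    push_cast; ring]
  exact Complex.norm_exp_ofReal_mul_I _

lemma abs_weylSum_le (d N : ℕ) (x : Fin d → ℝ) : ‖weylSum d x N‖ ≤ N := by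
  rw [weylSum_eq]
  calc ‖∑ n ∈ Finset.Ioc 0 N, ee d n x‖
      ≤ ∑ n ∈ Finset.Ioc 0 N, ‖ee d n x‖ := by
        exact norm_sum_le _ _
    _ = N := by simp [abs_ee]
open MeasureTheory Filter Finset

noncomputable def box0 (d : ℕ) : Set (Fin d → ℝ) :=
  Set.univ.pi fun _ : Fin d => Set.Ico (0 : ℝ) 1

lemma volume_box0 (d : ℕ) : volume (box0 d) = 1 := by
  rw [box0, volume_pi_pi]
  simp [Real.volume_Ico]

lemma box0_measure_eq (d : ℕ) :
    (volume : Measure (Fin d → ℝ)).restrict (box0 d) =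
      Measure.pi fun _ : Fin d => volume.restrict (Set.Ico (0 : ℝ) 1) := by
  refine (Measure.pi_eq fun s hs => ?_).symm
  rw [Measure.restrict_apply (MeasurableSet.univ_pi hs)]
  have h1 : (Set.univ.pi s) ∩ box0 d = Set.univ.pi fun i => s i ∩ Set.Ico (0:ℝ) 1 := by
    rw [box0, ← Set.pi_inter_distrib]
  rw [h1, volume_pi_pi]
  congr 1
  ext i
  rw [Measure.restrict_apply (hs i)]

lemma my_fubini {d : ℕ} (μ0 : Measure ℝ) [SigmaFinite μ0] (f : Fin d → ℝ → ℂ) :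
    ∫ x, (∏ i, f i (x i)) ∂(Measure.pi fun _ : Fin d => μ0) = ∏ i, ∫ t, f i t ∂μ0 := by
  letI : MeasureSpace ℝ := ⟨μ0⟩
  letI : SigmaFinite (volume : Measure ℝ) := ‹SigmaFinite μ0›
  exact MeasureTheory.integral_fintype_prod_eq_prod (μ := fun _ => μ0) f

lemma integral_exp_int (c : ℤ) (hc : c ≠ 0) :
    ∫ t in Set.Ico (0:ℝ) 1, Complex.exp (2 * (Real.pi : ℂ) * Complex.I * (c : ℂ) * t) = 0 := by
  have h2 : (2 * (Real.pi : ℂ) * Complex.I * (c : ℂ)) ≠ 0 := by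
    simp [Real.pi_ne_zero, Complex.I_ne_zero, hc]
  have := integral_exp_mul_complex (a := (0:ℝ)) (b := 1) h2
  rw [MeasureTheory.integral_Ico_eq_integral_Ioo,
    ← MeasureTheory.integral_Ioc_eq_integral_Ioo,
    ← intervalIntegral.integral_of_le (by norm_num : (0:ℝ) ≤ 1), this]
  rw [show (2 * (Real.pi : ℂ) * Complex.I * (c : ℂ)) * ((1:ℝ):ℂ) = (c:ℂ) * (2 * Real.pi * Complex.I) by
    push_cast; ring]
  rw [Complex.exp_int_mul_two_pi_mul_I]
  simp

lemma integrable_cont {d : ℕ} {E : Type*} [NormedAddCommGroup E] {f : (Fin d → ℝ) → E}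
    (hf : Continuous f) : Integrable f (volume.restrict (box0 d)) := by
  have hc : IsCompact (Set.univ.pi fun _ : Fin d => Set.Icc (0:ℝ) 1) :=
    isCompact_univ_pi fun _ => isCompact_Icc
  have h1 : IntegrableOn f (Set.univ.pi fun _ : Fin d => Set.Icc (0:ℝ) 1) volume :=
    hf.continuousOn.integrableOn_compact hc
  exact h1.mono_set (Set.pi_mono fun i _ => Set.Ico_subset_Icc_self)

lemma ortho {d : ℕ} (hd : 0 < d) (n m : ℕ) (hnm : n ≠ m) :
    ∫ x, ee d n x * (starRingEnd ℂ) (ee d m x) ∂(volume.restrict (box0 d)) = 0 := by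
  have key : ∀ x : Fin d → ℝ, ee d n x * (starRingEnd ℂ) (ee d m x) =
      ∏ j : Fin d, Complex.exp
        (2 * (Real.pi : ℂ) * Complex.I * ((n:ℂ) ^ ((j:ℕ)+1) - (m:ℂ) ^ ((j:ℕ)+1)) * ((x j : ℝ) : ℂ)) := by
    intro x
    rw [ee, ee, ← Complex.exp_conj]
    rw [← Complex.exp_add, ← Complex.exp_sum]
    congr 1
    rw [sum_ee_real d m x]
    rw [map_mul, map_mul, map_mul, Complex.conj_I, Complex.conj_ofReal, Complex.conj_ofReal,
      map_ofNat]
    rw [Complex.ofReal_sum]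
    push_cast
    rw [Finset.mul_sum, Finset.mul_sum, ← Finset.sum_add_distrib]
    refine Finset.sum_congr rfl fun j _ => ?_
    ring
  simp only [key]
  rw [box0_measure_eq]
  rw [my_fubini (volume.restrict (Set.Ico (0:ℝ) 1))
    (fun j t => Complex.exp
      (2 * (Real.pi : ℂ) * Complex.I * ((n:ℂ) ^ ((j:ℕ)+1) - (m:ℂ) ^ ((j:ℕ)+1)) * ((t : ℝ) : ℂ)))]
  refine Finset.prod_eq_zero (Finset.mem_univ (⟨0, hd⟩ : Fin d)) ?_
  have hc : ((n:ℤ) - (m:ℤ)) ≠ 0 := by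
    intro h
    exact hnm (by omega)
  have h5 := integral_exp_int _ hc
  rw [show (((((n:ℤ) - (m:ℤ)) : ℤ) : ℂ)) = ((n:ℂ) ^ (((⟨0, hd⟩ : Fin d):ℕ)+1) - (m:ℂ) ^ (((⟨0, hd⟩ : Fin d):ℕ)+1)) by
    push_cast; ring] at h5
  exact h5

lemma prob_box0 (d : ℕ) : (volume.restrict (box0 d)) Set.univ = 1 := by
  rw [Measure.restrict_apply_univ, volume_box0]

lemma ee_mul_conj_self (d n : ℕ) (x : Fin d → ℝ) :
    ee d n x * (starRingEnd ℂ) (ee d n x) = 1 := by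
  rw [Complex.mul_conj, ← Complex.sq_norm, abs_ee]
  norm_num

lemma integral_sq_abs {d : ℕ} (hd : 0 < d) (s : Finset ℕ) :
    ∫ x, ‖∑ n ∈ s, ee d n x‖ ^ 2 ∂(volume.restrict (box0 d)) = s.card := by
  set μ := volume.restrict (box0 d) with hμ
  have hprob : IsProbabilityMeasure μ := ⟨prob_box0 d⟩
  have hint : ∀ n m : ℕ, Integrable (fun x => ee d n x * (starRingEnd ℂ) (ee d m x)) μ :=
    fun n m => integrable_cont ((cont_ee d n).mul (Complex.continuous_conj.comp (cont_ee d m)))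
  have hC : ∫ x, (∑ n ∈ s, ee d n x) * (starRingEnd ℂ) (∑ m ∈ s, ee d m x) ∂μ
      = (s.card : ℂ) := by
    have hexp : ∀ x : Fin d → ℝ, (∑ n ∈ s, ee d n x) * (starRingEnd ℂ) (∑ m ∈ s, ee d m x)
        = ∑ n ∈ s, ∑ m ∈ s, ee d n x * (starRingEnd ℂ) (ee d m x) := by
      intro x
      rw [map_sum, Finset.sum_mul_sum]
    simp only [hexp]
    rw [integral_finset_sum _ (fun n _ => integrable_finset_sum _ (fun m _ => hint n m))]
    have : ∀ n ∈ s, ∫ x, (∑ m ∈ s, ee d n x * (starRingEnd ℂ) (ee d m x)) ∂μ = 1 := by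
      intro n hn
      rw [integral_finset_sum _ (fun m _ => hint n m)]
      rw [Finset.sum_eq_single_of_mem n hn]
      · simp only [ee_mul_conj_self]
        simp [hprob.measure_univ]
      · intro m _ hmn
        exact ortho hd n m (Ne.symm hmn)
    rw [Finset.sum_congr rfl this]
    simp
  have hre : ∀ x : Fin d → ℝ, ((‖∑ n ∈ s, ee d n x‖ ^ 2 : ℝ) : ℂ)
      = (∑ n ∈ s, ee d n x) * (starRingEnd ℂ) (∑ m ∈ s, ee d m x) := by
    intro x
    rw [Complex.mul_conj, Complex.sq_norm]
  have hre' : (fun x : Fin d → ℝ => (∑ n ∈ s, ee d n x) * (starRingEnd ℂ) (∑ m ∈ s, ee d m x))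
      = fun x => ((‖∑ n ∈ s, ee d n x‖ ^ 2 : ℝ) : ℂ) := funext fun x => (hre x).symm
  rw [hre'] at hC
  have hintf : Integrable (fun x : Fin d → ℝ => ‖∑ n ∈ s, ee d n x‖ ^ 2) μ :=
    integrable_cont (((continuous_norm.comp
      (continuous_finset_sum _ fun n _ => cont_ee d n))).pow 2)
  have hcoe := Complex.ofRealCLM.integral_comp_comm hintf
  simp only [Complex.ofRealCLM_apply] at hcoe
  rw [hcoe] at hC
  exact_mod_cast hC

lemma weylSum_diff {d : ℕ} (a b : ℕ) (hab : a ≤ b) (x : Fin d → ℝ) :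
    weylSum d x b - weylSum d x a = ∑ n ∈ Finset.Ioc a b, ee d n x := by
  rw [weylSum_eq, weylSum_eq, ← Finset.sum_Ioc_consecutive _ (Nat.zero_le a) hab]
  ring

lemma integral_sq_inc {d : ℕ} (hd : 0 < d) (a b : ℕ) (hab : a ≤ b) :
    ∫ x, ‖weylSum d x b - weylSum d x a‖ ^ 2 ∂(volume.restrict (box0 d))
      = ((b - a : ℕ) : ℝ) := by
  have h1 : (fun x : Fin d → ℝ => ‖weylSum d x b - weylSum d x a‖ ^ 2)
      = fun x => ‖∑ n ∈ Finset.Ioc a b, ee d n x‖ ^ 2 := by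
    funext x; rw [weylSum_diff a b hab]
  rw [h1, integral_sq_abs hd, Nat.card_Ioc]

noncomputable def Gj (d K j : ℕ) (x : Fin d → ℝ) : ℝ :=
  Real.sqrt (∑ b ∈ Finset.range (2^(K-j)),
    ‖weylSum d x ((b+1)*2^j) - weylSum d x (b*2^j)‖ ^ 2)

noncomputable def gg (d K : ℕ) (x : Fin d → ℝ) : ℝ :=
  ∑ j ∈ Finset.range (K+1), Gj d K j x

lemma Gj_nonneg (d K j : ℕ) (x : Fin d → ℝ) : 0 ≤ Gj d K j x := Real.sqrt_nonneg _

lemma gg_nonneg (d K : ℕ) (x : Fin d → ℝ) : 0 ≤ gg d K x :=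
  Finset.sum_nonneg fun j _ => Gj_nonneg d K j x

lemma cont_Gj (d K j : ℕ) : Continuous (Gj d K j) := by
  unfold Gj
  exact Real.continuous_sqrt.comp (continuous_finset_sum _ fun b _ =>
    ((continuous_norm.comp ((cont_weylSum d _).sub (cont_weylSum d _))).pow 2))

lemma cont_gg (d K : ℕ) : Continuous (gg d K) :=
  continuous_finset_sum _ fun j _ => cont_Gj d K j

lemma weylSum_zero (d : ℕ) (x : Fin d → ℝ) : weylSum d x 0 = 0 := by
  simp [weylSum]

lemma chain (d K N : ℕ) (hN : N ≤ 2^K) (x : Fin d → ℝ) :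
    ‖weylSum d x N‖ ≤ gg d K x := by
  have htel : weylSum d x N = ∑ j ∈ Finset.range (K+1),
      (weylSum d x (2^j * (N / 2^j)) - weylSum d x (2^(j+1) * (N / 2^(j+1)))) := by
    rw [Finset.sum_range_sub' (f := fun j => weylSum d x (2^j * (N / 2^j)))]
    have h0 : 2^0 * (N / 2^0) = N := by simp
    have hK1 : N / 2^(K+1) = 0 :=
      Nat.div_eq_of_lt (lt_of_le_of_lt hN (Nat.pow_lt_pow_succ (by norm_num)))
    rw [h0, hK1]
    simp [weylSum_zero]
  rw [htel]
  calc ‖∑ j ∈ Finset.range (K+1),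
        (weylSum d x (2^j * (N / 2^j)) - weylSum d x (2^(j+1) * (N / 2^(j+1))))‖
      ≤ ∑ j ∈ Finset.range (K+1), ‖weylSum d x (2^j * (N / 2^j)) - weylSum d x (2^(j+1) * (N / 2^(j+1)))‖ :=
        norm_sum_le _ _
    _ ≤ ∑ j ∈ Finset.range (K+1), Gj d K j x := by
        refine Finset.sum_le_sum fun j hj => ?_
        have hjK : j ≤ K := Nat.lt_succ_iff.mp (Finset.mem_range.mp hj)
        set q := N / 2^(j+1) with hqdef
        have hq : N / 2^j / 2 = q := by
          rw [Nat.div_div_eq_div_mul, hqdef, pow_succ]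
        rcases Nat.mod_two_eq_zero_or_one (N / 2^j) with h2 | h2
        · have heq : 2^j * (N / 2^j) = 2^(j+1) * q := by
            have hr : N / 2^j = 2 * q := by omega
            rw [hr, pow_succ]; ring
          rw [heq]
          simpa using Gj_nonneg d K j x
        · have hr : N / 2^j = 2*q + 1 := by omega
          have hup : 2^j * (N / 2^j) = (2*q+1) * 2^j := by rw [hr]; ring
          have hlo : 2^(j+1) * q = (2*q) * 2^j := by ring
          rw [hup, hlo]
          have hble : 2*q + 1 ≤ 2^(K-j) := by
            have h1 : (2*q+1) * 2^j ≤ N := by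
              rw [← hup, Nat.mul_comm]
              exact Nat.div_mul_le_self N (2^j)
            have h2' : (2*q+1) * 2^j ≤ 2^(K-j) * 2^j := by
              refine le_trans (h1.trans hN) ?_
              rw [← pow_add, Nat.sub_add_cancel hjK]
            exact Nat.le_of_mul_le_mul_right h2' (Nat.pow_pos (n := j) (by norm_num))
          have hbmem : 2*q ∈ Finset.range (2^(K-j)) := Finset.mem_range.mpr (by omega)
          unfold Gj
          rw [show ‖weylSum d x ((2*q+1) * 2^j) - weylSum d x ((2*q) * 2^j)‖
              = Real.sqrt (‖weylSum d x ((2*q+1) * 2^j)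
                - weylSum d x ((2*q) * 2^j)‖ ^ 2) from
            (Real.sqrt_sq (norm_nonneg _)).symm]
          refine Real.sqrt_le_sqrt ?_
          refine Finset.single_le_sum (f := fun b => ‖weylSum d x ((b+1)*2^j)
            - weylSum d x (b*2^j)‖ ^ 2) (fun b _ => sq_nonneg _) hbmem
    _ = gg d K x := rfl

lemma cont_absD (d a b : ℕ) :
    Continuous (fun x : Fin d → ℝ => ‖weylSum d x a - weylSum d x b‖ ^ 2) :=
  (continuous_norm.comp ((cont_weylSum d a).sub (cont_weylSum d b))).pow 2

lemma integral_Gj_sq {d : ℕ} (hd : 0 < d) (K j : ℕ) (hj : j ≤ K) :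
    ∫ x, Gj d K j x ^ 2 ∂(volume.restrict (box0 d)) = (2:ℝ)^K := by
  have hpt : ∀ x : Fin d → ℝ, Gj d K j x ^ 2 = ∑ b ∈ Finset.range (2^(K-j)),
      ‖weylSum d x ((b+1)*2^j) - weylSum d x (b*2^j)‖ ^ 2 := by
    intro x
    rw [Gj, Real.sq_sqrt (Finset.sum_nonneg fun b _ => sq_nonneg _)]
  simp only [hpt]
  rw [MeasureTheory.integral_finset_sum _ (fun b _ => integrable_cont
    (cont_absD d ((b+1)*2^j) (b*2^j)))]
  have hterm : ∀ b ∈ Finset.range (2^(K-j)),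
      ∫ x, ‖weylSum d x ((b+1)*2^j) - weylSum d x (b*2^j)‖ ^ 2
        ∂(volume.restrict (box0 d)) = (2^j : ℝ) := by
    intro b _
    rw [integral_sq_inc hd (b*2^j) ((b+1)*2^j) (Nat.mul_le_mul_right _ (Nat.le_succ b))]
    congr 1
    have : (b+1)*2^j - b*2^j = 2^j := by
      rw [Nat.add_mul, one_mul, Nat.add_sub_cancel_left]
    rw [this]
    push_cast
    rfl
  rw [Finset.sum_congr rfl hterm, Finset.sum_const, Finset.card_range, nsmul_eq_mul]
  push_cast
  rw [← pow_add, Nat.sub_add_cancel hj]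

lemma var_gg {d : ℕ} (hd : 0 < d) (K : ℕ) :
    ∫ x, gg d K x ^ 2 ∂(volume.restrict (box0 d)) ≤ ((K:ℝ)+1)^2 * 2^K := by
  set μ := volume.restrict (box0 d) with hμ
  have hpt : ∀ x : Fin d → ℝ, gg d K x ^ 2 ≤ ((K:ℝ)+1) * ∑ j ∈ Finset.range (K+1), Gj d K j x ^ 2 := by
    intro x
    have := sq_sum_le_card_mul_sum_sq (s := Finset.range (K+1)) (f := fun j => Gj d K j x)
    simpa [gg] using this
  have hint1 : Integrable (fun x => gg d K x ^ 2) μ := integrable_cont ((cont_gg d K).pow 2)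
  have hint2 : Integrable (fun x => ((K:ℝ)+1) * ∑ j ∈ Finset.range (K+1), Gj d K j x ^ 2) μ :=
    integrable_cont (continuous_const.mul (continuous_finset_sum _ fun j _ => (cont_Gj d K j).pow 2))
  calc ∫ x, gg d K x ^ 2 ∂μ
      ≤ ∫ x, ((K:ℝ)+1) * ∑ j ∈ Finset.range (K+1), Gj d K j x ^ 2 ∂μ :=
        MeasureTheory.integral_mono hint1 hint2 hpt
    _ = ((K:ℝ)+1) * ∑ j ∈ Finset.range (K+1), ∫ x, Gj d K j x ^ 2 ∂μ := by
        rw [MeasureTheory.integral_const_mul,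
          MeasureTheory.integral_finset_sum _ (fun j _ => integrable_cont (f := fun x => Gj d K j x ^ 2) ((cont_Gj d K j).pow 2))]
    _ = ((K:ℝ)+1)^2 * 2^K := by
        rw [Finset.sum_congr rfl (fun j hj => integral_Gj_sq hd K j
          (Nat.lt_succ_iff.mp (Finset.mem_range.mp hj)))]
        rw [Finset.sum_const, Finset.card_range, nsmul_eq_mul]
        push_cast; ring

lemma cheb {d : ℕ} (hd : 0 < d) (K : ℕ) (T : ℝ) (hT : 0 < T) :
    (volume.restrict (box0 d)) {x | T ≤ gg d K x} ≤
      ENNReal.ofReal (((K:ℝ)+1)^2 * 2^K / T^2) := by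
  set μ := volume.restrict (box0 d) with hμdef
  have hprob : IsProbabilityMeasure μ := ⟨prob_box0 d⟩
  have hsub : {x | T ≤ gg d K x} ⊆ {x | T^2 ≤ gg d K x ^ 2} := fun x hx =>
    pow_le_pow_left₀ hT.le hx 2
  have h1 := mul_meas_ge_le_integral_of_nonneg (μ := μ)
    (Filter.Eventually.of_forall (fun x => sq_nonneg (gg d K x)))
    (integrable_cont ((cont_gg d K).pow 2)) (T^2)
  have h2 : T^2 * (μ {x | T^2 ≤ gg d K x ^ 2}).toReal ≤ ((K:ℝ)+1)^2 * 2^K :=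
    h1.trans (var_gg hd K)
  have hmono : (μ {x | T ≤ gg d K x}).toReal ≤ (μ {x | T^2 ≤ gg d K x ^ 2}).toReal :=
    ENNReal.toReal_mono (measure_ne_top μ _) (measure_mono hsub)
  have h3 : (μ {x | T ≤ gg d K x}).toReal ≤ ((K:ℝ)+1)^2 * 2^K / T^2 := by
    rw [le_div_iff₀ (by positivity)]
    nlinarith [ENNReal.toReal_nonneg (a := μ {x | T ≤ gg d K x})]
  calc μ {x | T ≤ gg d K x}
      = ENNReal.ofReal ((μ {x | T ≤ gg d K x}).toReal) :=
        (ENNReal.ofReal_toReal (measure_ne_top _ _)).symm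
    _ ≤ ENNReal.ofReal (((K:ℝ)+1)^2 * 2^K / T^2) := ENNReal.ofReal_le_ofReal h3

lemma Tsq (K : ℕ) (p : ℝ) :
    (Real.sqrt ((2:ℝ)^K) * (((K:ℝ)) * Real.log 2)^p)^2
      = (2:ℝ)^K * (((K:ℝ)) * Real.log 2)^(p*2) := by
  rw [mul_pow, Real.sq_sqrt (by positivity)]
  congr 1
  rw [← Real.rpow_natCast ((((K:ℝ)) * Real.log 2)^p) 2, ← Real.rpow_mul (by positivity)]
  norm_num

lemma bnd_le (ε : ℝ) (hε : 0 < ε) (k : ℕ) :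
    ((k:ℝ)+3)^2 * 2^(k+2) /
      (Real.sqrt ((2:ℝ)^(k+1)) * ((((k+1:ℕ):ℝ)) * Real.log 2)^((3:ℝ)/2+ε))^2
    ≤ (18 * (Real.log 2 ^ ((3:ℝ)+2*ε))⁻¹) * ((((k:ℝ)+1)^((1:ℝ)+2*ε))⁻¹) := by
  have hL : 0 < Real.log 2 := Real.log_pos (by norm_num)
  have hu : (0:ℝ) < (k:ℝ)+1 := by positivity
  rw [Tsq (k+1) ((3:ℝ)/2+ε)]
  have hexp : ((3:ℝ)/2+ε) * 2 = ((1:ℝ)+2*ε) + 2 := by ring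
  push_cast
  rw [hexp]
  have e1 : (((k:ℝ)+1) * Real.log 2)^(((1:ℝ)+2*ε) + 2)
      = ((k:ℝ)+1)^((1:ℝ)+2*ε) * ((k:ℝ)+1)^(2:ℝ) * Real.log 2 ^ (((1:ℝ)+2*ε) + 2) := by
    rw [Real.mul_rpow hu.le hL.le, Real.rpow_add hu]
  rw [e1]
  have h2 : Real.log 2 ^ (((1:ℝ)+2*ε) + 2) = Real.log 2 ^ ((3:ℝ)+2*ε) := by
    congr 1; ring
  rw [h2]
  have hr1 : (0:ℝ) < ((k:ℝ)+1)^((1:ℝ)+2*ε) := Real.rpow_pos_of_pos hu _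
  have hr2 : (0:ℝ) < Real.log 2 ^ ((3:ℝ)+2*ε) := Real.rpow_pos_of_pos hL _
  have hr3 : ((k:ℝ)+1)^(2:ℝ) = ((k:ℝ)+1)^(2:ℕ) := by
    rw [← Real.rpow_natCast (((k:ℝ)+1)) 2]; norm_num
  rw [hr3]
  have hp2 : (0:ℝ) < (2:ℝ)^(k+1) := by positivity
  rw [div_le_iff₀ (by positivity)]
  have hkey : ((k:ℝ)+3)^2 * 2^(k+2) ≤ 18 * (2:ℝ)^(k+1) * ((k:ℝ)+1)^(2:ℕ) := by
    have : ((2:ℝ))^(k+2) = 2 * 2^(k+1) := by ring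
    rw [this]
    nlinarith [sq_nonneg ((k:ℝ)), hp2, sq_nonneg ((k:ℝ)+1), mul_pos hp2 (by positivity : (0:ℝ) < ((k:ℝ)+1)^(2:ℕ))]
  calc ((k:ℝ)+3)^2 * 2^(k+2) ≤ 18 * (2:ℝ)^(k+1) * ((k:ℝ)+1)^(2:ℕ) := hkey
    _ = 18 * (Real.log 2 ^ ((3:ℝ)+2*ε))⁻¹ * (((k:ℝ)+1)^((1:ℝ)+2*ε))⁻¹ *
        (2^(k+1) * (((k:ℝ)+1)^((1:ℝ)+2*ε) * ((k:ℝ)+1)^(2:ℕ) * Real.log 2 ^ ((3:ℝ)+2*ε))) := by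
      field_simp

lemma sum_ne_top (ε : ℝ) (hε : 0 < ε) (c : ℝ) (hc : 0 ≤ c) :
    (∑' k : ℕ, ENNReal.ofReal (c * ((((k:ℝ)+1)^((1:ℝ)+2*ε))⁻¹))) ≠ ⊤ := by
  have hs : Summable (fun k : ℕ => c * ((((k:ℝ)+1)^((1:ℝ)+2*ε))⁻¹)) := by
    apply Summable.mul_left
    have h0 : Summable (fun n : ℕ => (((n:ℝ))^((1:ℝ)+2*ε))⁻¹) :=
      Real.summable_nat_rpow_inv.mpr (by linarith)
    have h1 := (summable_nat_add_iff 1).mpr h0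
    have h2 : (fun n : ℕ => ((((n+1:ℕ):ℝ))^((1:ℝ)+2*ε))⁻¹)
        = fun n : ℕ => ((((n:ℝ)+1))^((1:ℝ)+2*ε))⁻¹ := by
      funext n; push_cast; rfl
    rwa [h2] at h1
  have hnn : ∀ k : ℕ, 0 ≤ c * ((((k:ℝ)+1)^((1:ℝ)+2*ε))⁻¹) := by
    intro k
    have : (0:ℝ) < ((k:ℝ)+1)^((1:ℝ)+2*ε) := Real.rpow_pos_of_pos (by positivity) _
    positivity
  rw [← ENNReal.ofReal_tsum_of_nonneg hnn hs]
  exact ENNReal.ofReal_ne_top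

/-- For almost all `x ∈ [0,1)^d` there is `C = C(x, ε) > 0` with
`|S_d(x; N)| ≤ C · N^{1/2} (log N)^{3/2+ε}` for all `N ≥ 2`. -/
theorem stmt0 (d : ℕ) (hd : 2 ≤ d) (ε : ℝ) (hε : 0 < ε) :
    ∀ᵐ x ∂(volume.restrict (Set.univ.pi fun _ : Fin d => Set.Ico (0 : ℝ) 1)),
      ∃ C : ℝ, 0 < C ∧ ∀ N : ℕ, 2 ≤ N →
        ‖weylSum d x N‖ ≤
          C * (N : ℝ) ^ ((1 : ℝ) / 2) * Real.log N ^ ((3 : ℝ) / 2 + ε) := by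
  have hd0 : 0 < d := by omega
  have hL : 0 < Real.log 2 := Real.log_pos (by norm_num)
  set p : ℝ := (3:ℝ)/2 + ε with hp
  have hppos : 0 < p := by rw [hp]; linarith
  set T : ℕ → ℝ := fun K => Real.sqrt ((2:ℝ)^K) * (((K:ℝ)) * Real.log 2)^p with hT
  have hTpos : ∀ K : ℕ, 1 ≤ K → 0 < T K := by
    intro K hK
    have h1 : (0:ℝ) < (K:ℝ) * Real.log 2 := by
      have : (1:ℝ) ≤ (K:ℝ) := by exact_mod_cast hK
      nlinarith
    exact mul_pos (Real.sqrt_pos.mpr (by positivity)) (Real.rpow_pos_of_pos h1 _)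
  set s : ℕ → Set (Fin d → ℝ) := fun k => {x | T (k+1) ≤ gg d (k+2) x} with hs
  set μ := volume.restrict (box0 d) with hμ
  set c : ℝ := 18 * (Real.log 2 ^ ((3:ℝ)+2*ε))⁻¹ with hc
  have hcnn : 0 ≤ c := by
    rw [hc]
    have : (0:ℝ) < Real.log 2 ^ ((3:ℝ)+2*ε) := Real.rpow_pos_of_pos hL _
    positivity
  have hmeas : ∀ k : ℕ, μ (s k) ≤ ENNReal.ofReal (c * ((((k:ℝ)+1)^((1:ℝ)+2*ε))⁻¹)) := by
    intro k
    refine le_trans (cheb hd0 (k+2) (T (k+1)) (hTpos (k+1) (by omega))) ?_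
    refine ENNReal.ofReal_le_ofReal ?_
    have := bnd_le ε hε k
    rw [hT]
    calc (((k+2:ℕ):ℝ)+1)^2 * 2^(k+2) /
          (Real.sqrt ((2:ℝ)^(k+1)) * ((((k+1:ℕ)):ℝ) * Real.log 2)^p)^2
        = ((k:ℝ)+3)^2 * 2^(k+2) /
          (Real.sqrt ((2:ℝ)^(k+1)) * ((((k+1:ℕ)):ℝ) * Real.log 2)^((3:ℝ)/2+ε))^2 := by
          rw [hp]; push_cast; ring_nf
      _ ≤ (18 * (Real.log 2 ^ ((3:ℝ)+2*ε))⁻¹) * ((((k:ℝ)+1)^((1:ℝ)+2*ε))⁻¹) := this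
      _ = c * ((((k:ℝ)+1)^((1:ℝ)+2*ε))⁻¹) := by rw [hc]
  have htsum : (∑' k : ℕ, μ (s k)) ≠ ⊤ := by
    refine ne_top_of_le_ne_top (sum_ne_top ε hε c hcnn) (ENNReal.tsum_le_tsum hmeas)
  have hBC := MeasureTheory.ae_eventually_notMem (μ := μ) (s := s) htsum
  rw [show (Set.univ.pi fun _ : Fin d => Set.Ico (0:ℝ) 1) = box0 d from rfl, ← hμ]
  filter_upwards [hBC] with x hx
  obtain ⟨k₀, hk₀⟩ := Filter.eventually_atTop.mp hx
  have hgood : ∀ k ≥ k₀, gg d (k+2) x < T (k+1) := by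
    intro k hk
    have := hk₀ k hk
    rw [hs] at this
    simpa using not_le.mp this
  -- the constant
  set C : ℝ := 1 + ∑ N ∈ Finset.range (2^(k₀+2)),
    (if 2 ≤ N then (N:ℝ) / ((N:ℝ)^((1:ℝ)/2) * Real.log N ^ p) else 0) with hC
  have hterm_nn : ∀ N : ℕ,
      0 ≤ (if 2 ≤ N then (N:ℝ) / ((N:ℝ)^((1:ℝ)/2) * Real.log N ^ p) else 0) := by
    intro N
    split
    · have h2 : (1:ℝ) ≤ (N:ℝ) := by exact_mod_cast le_trans (by norm_num) ‹2 ≤ N›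
      have := Real.log_nonneg h2
      positivity
    · exact le_rfl
  have hCpos : 0 < C := by
    rw [hC]
    have := Finset.sum_nonneg (fun N (_ : N ∈ Finset.range (2^(k₀+2))) => hterm_nn N)
    linarith
  have hC1 : 1 ≤ C := by
    rw [hC]
    have := Finset.sum_nonneg (fun N (_ : N ∈ Finset.range (2^(k₀+2))) => hterm_nn N)
    linarith
  refine ⟨C, hCpos, ?_⟩
  intro N hN
  set K := Nat.log 2 N with hKdef
  have hK1 : 1 ≤ K := Nat.log_pos (by norm_num) hN
  have hKle : 2^K ≤ N := Nat.pow_log_le_self 2 (by omega)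
  have hKlt : N < 2^(K+1) := Nat.lt_pow_succ_log_self (by norm_num) N
  have hN1 : (1:ℝ) < (N:ℝ) := by exact_mod_cast lt_of_lt_of_le (by norm_num) hN
  have hlogN : 0 < Real.log N := Real.log_pos hN1
  have hX : (0:ℝ) < (N:ℝ)^((1:ℝ)/2) * Real.log N ^ p :=
    mul_pos (Real.rpow_pos_of_pos (by positivity) _) (Real.rpow_pos_of_pos hlogN _)
  rw [mul_assoc]
  by_cases hbig : k₀ + 1 ≤ K
  · -- large N
    have habs : ‖weylSum d x N‖ ≤ gg d (K+1) x :=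
      chain d (K+1) N hKlt.le x
    have hgg : gg d (K+1) x < T K := by
      have h1 := hgood (K-1) (by omega)
      have e1 : K - 1 + 2 = K + 1 := by omega
      have e2 : K - 1 + 1 = K := by omega
      rwa [e1, e2] at h1
    have hTle : T K ≤ (N:ℝ)^((1:ℝ)/2) * Real.log N ^ p := by
      rw [hT]
      have hf1 : Real.sqrt ((2:ℝ)^K) ≤ (N:ℝ)^((1:ℝ)/2) := by
        rw [Real.sqrt_eq_rpow]
        refine Real.rpow_le_rpow (by positivity) ?_ (by norm_num)
        exact_mod_cast hKle
      have hf2 : ((K:ℝ) * Real.log 2)^p ≤ Real.log N ^ p := by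
        refine Real.rpow_le_rpow (by positivity) ?_ hppos.le
        have hlp : Real.log ((2:ℝ)^K) = (K:ℝ) * Real.log 2 := by
          rw [Real.log_pow]
        rw [← hlp]
        refine Real.log_le_log (by positivity) ?_
        exact_mod_cast hKle
      exact mul_le_mul hf1 hf2 (by positivity) (by positivity)
    calc ‖weylSum d x N‖ ≤ gg d (K+1) x := habs
      _ ≤ T K := hgg.le
      _ ≤ (N:ℝ)^((1:ℝ)/2) * Real.log N ^ p := hTle
      _ ≤ C * ((N:ℝ)^((1:ℝ)/2) * Real.log N ^ p) := le_mul_of_one_le_left hX.le hC1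
  · -- small N
    have hmem : N ∈ Finset.range (2^(k₀+2)) := by
      refine Finset.mem_range.mpr ?_
      have : 2^(K+1) ≤ 2^(k₀+2) := Nat.pow_le_pow_right (by norm_num) (by omega)
      omega
    have hterm_le : (N:ℝ) / ((N:ℝ)^((1:ℝ)/2) * Real.log N ^ p) ≤ C := by
      have h1 := Finset.single_le_sum (f := fun N : ℕ =>
        (if 2 ≤ N then (N:ℝ) / ((N:ℝ)^((1:ℝ)/2) * Real.log N ^ p) else 0))
        (fun n _ => hterm_nn n) hmem
      simp only [hN, if_true] at h1
      rw [hC]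
      linarith
    calc ‖weylSum d x N‖ ≤ (N:ℝ) := abs_weylSum_le d N x
      _ = ((N:ℝ) / ((N:ℝ)^((1:ℝ)/2) * Real.log N ^ p)) * ((N:ℝ)^((1:ℝ)/2) * Real.log N ^ p) :=
        (div_mul_cancel₀ _ hX.ne').symm
      _ ≤ C * ((N:ℝ)^((1:ℝ)/2) * Real.log N ^ p) :=
        mul_le_mul_of_nonneg_right hterm_le hX.le
end

section
/- For each real 0 < α < 1 and each integer d ≥ 2, the complement [0,1)^d \ E_{α,d} is a set of the first Baire category (i.e. meagre: a countable union of nowhere dense sets) in the torus T_d. -/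
open Filter

/-- The exceptional set `E_{α,d}`: points of `[0,1)^d` with `|S_d(x;N)| ≥ N^α`
for infinitely many `N`. -/
def excSet (d : ℕ) (α : ℝ) : Set (Fin d → ℝ) :=
  {x | (∀ j, x j ∈ Set.Ico (0 : ℝ) 1) ∧
    ∃ᶠ N : ℕ in atTop, (N : ℝ) ^ α ≤ ‖weylSum d x N‖}

/-! ### Auxiliary lemmas -/

/-- Binomial expansion to second order. -/
lemma wq_binom : ∀ (k : ℕ) (u t : ℤ), ∃ c : ℤ,
    (u + t) ^ (k + 1) = u ^ (k + 1) + (k + 1) * u ^ k * t + t ^ 2 * c := by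
  intro k
  induction k with
  | zero => exact fun u t => ⟨0, by ring⟩
  | succ k ih =>
    intro u t
    obtain ⟨c, hc⟩ := ih u t
    refine ⟨u * c + (k + 1) * u ^ k + t * c, ?_⟩
    have h : (u + t) ^ (k + 1 + 1) = (u + t) * (u + t) ^ (k + 1) := by ring
    rw [h, hc]
    push_cast
    ring

noncomputable def wqPoly (d : ℕ) (a : Fin d → ℤ) (n : ℤ) : ℤ :=
  ∑ j : Fin d, a j * n ^ ((j : ℕ) + 1)

noncomputable def wqDPoly (d : ℕ) (a : Fin d → ℤ) (n : ℤ) : ℤ :=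
  ∑ j : Fin d, a j * ((j : ℕ) + 1) * n ^ (j : ℕ)

lemma wq_taylor (d : ℕ) (a : Fin d → ℤ) (u t : ℤ) :
    ∃ c : ℤ, wqPoly d a (u + t) = wqPoly d a u + wqDPoly d a u * t + t ^ 2 * c := by
  choose c hc using fun j : Fin d => wq_binom (j : ℕ) u t
  refine ⟨∑ j, a j * c j, ?_⟩
  simp only [wqPoly, wqDPoly, Finset.sum_mul, Finset.mul_sum]
  rw [← Finset.sum_add_distrib, ← Finset.sum_add_distrib]
  refine Finset.sum_congr rfl fun j _ => ?_
  rw [hc j]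
  ring

noncomputable def wqE (q : ℕ) (m : ℤ) : ℂ :=
  Complex.exp (2 * (Real.pi : ℂ) * Complex.I * ((m : ℂ) / (q : ℂ)))

lemma wqE_congr (q : ℕ) (hq : q ≠ 0) {m m' : ℤ} (h : (q : ℤ) ∣ m - m') :
    wqE q m = wqE q m' := by
  obtain ⟨k, hk⟩ := h
  have hm : m = m' + q * k := by linarith
  have hqC : (q : ℂ) ≠ 0 := Nat.cast_ne_zero.2 hq
  have harg : 2 * (Real.pi : ℂ) * Complex.I * ((m : ℂ) / (q : ℂ)) =
      2 * (Real.pi : ℂ) * Complex.I * ((m' : ℂ) / (q : ℂ)) + (k : ℂ) * (2 * (Real.pi : ℂ) * Complex.I) := by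
    rw [hm]
    push_cast
    field_simp
  rw [wqE, harg, Complex.exp_add, Complex.exp_int_mul_two_pi_mul_I, mul_one, wqE]

lemma wqE_zero (q : ℕ) : wqE q 0 = 1 := by
  simp [wqE]

lemma wqE_split (p : ℕ) (hp : p ≠ 0) (A B : ℤ) :
    wqE (p ^ 2) (A + p * B) = wqE (p ^ 2) A * wqE p B := by
  have hpC : (p : ℂ) ≠ 0 := Nat.cast_ne_zero.2 hp
  rw [wqE, wqE, wqE, ← Complex.exp_add, ← mul_add]
  congr 1
  push_cast
  field_simp

lemma wqE_geom (p : ℕ) (hp : 0 < p) (b : ℤ) :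
    ∑ v ∈ Finset.range p, wqE p (b * v) = if (p : ℤ) ∣ b then (p : ℂ) else 0 := by
  have hpC : (p : ℂ) ≠ 0 := Nat.cast_ne_zero.2 hp.ne'
  have hterm : ∀ v : ℕ, wqE p (b * v) = (wqE p b) ^ v := by
    intro v
    rw [wqE, wqE, ← Complex.exp_nat_mul]
    congr 1
    push_cast
    ring
  simp only [hterm]
  by_cases hdvd : (p : ℤ) ∣ b
  · obtain ⟨c, hc⟩ := hdvd
    have h1 : wqE p b = 1 := by
      have : (p : ℤ) ∣ b - 0 := by simp [hc]
      rw [wqE_congr p hp.ne' this, wqE_zero]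
    rw [if_pos ⟨c, hc⟩]
    simp [h1]
  · have hz : wqE p b ≠ 1 := by
      intro h1
      rw [wqE, Complex.exp_eq_one_iff] at h1
      obtain ⟨n, hn⟩ := h1
      have hpi : (2 * (Real.pi : ℂ) * Complex.I) ≠ 0 := by
        simp [Real.pi_ne_zero, Complex.I_ne_zero, Complex.ofReal_ne_zero]
      have hb : (b : ℂ) / (p : ℂ) = (n : ℂ) :=
        mul_left_cancel₀ hpi (by rw [hn]; ring)
      rw [div_eq_iff hpC] at hb
      have : b = n * p := by exact_mod_cast hb
      exact hdvd ⟨n, by linarith⟩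
    rw [geom_sum_eq hz]
    have hpow : (wqE p b) ^ p = 1 := by
      rw [← hterm p]
      have : (p : ℤ) ∣ b * p - 0 := ⟨b, by ring⟩
      rw [wqE_congr p hp.ne' this, wqE_zero]
    rw [hpow]
    simp [hdvd]

lemma wq_dvd_dpoly (d : ℕ) (hd : 2 ≤ d) (p : ℕ) (a : Fin d → ℤ)
    (h0 : (p : ℤ) ∣ a ⟨0, by omega⟩) (h1 : (p : ℤ) ∣ (a ⟨1, by omega⟩ - 1))
    (hj : ∀ j : Fin d, 2 ≤ (j : ℕ) → (p : ℤ) ∣ a j) (u : ℤ) :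
    (p : ℤ) ∣ wqDPoly d a u - 2 * u := by
  have hsum : (2 * u : ℤ) = ∑ j : Fin d, (if j = ⟨1, by omega⟩ then 2 * u else 0) := by
    rw [Finset.sum_ite_eq' Finset.univ _ (fun _ => (2 * u : ℤ))]
    simp
  rw [wqDPoly, hsum, ← Finset.sum_sub_distrib]
  apply Finset.dvd_sum
  intro j _
  rcases j with ⟨jv, hjv⟩
  match jv, hjv with
  | 0, hjv =>
    have : (⟨0, hjv⟩ : Fin d) ≠ ⟨1, by omega⟩ := by simp [Fin.ext_iff]
    rw [if_neg this]
    simpa using h0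
  | 1, hjv =>
    rw [if_pos rfl]
    have : a ⟨1, hjv⟩ * ((1 : ℕ) + 1) * u ^ (1 : ℕ) - 2 * u = (a ⟨1, by omega⟩ - 1) * (2 * u) := by
      push_cast; ring
    rw [this]
    exact Dvd.dvd.mul_right h1 _
  | (n + 2), hjv =>
    have : (⟨n + 2, hjv⟩ : Fin d) ≠ ⟨1, by omega⟩ := by simp [Fin.ext_iff]
    rw [if_neg this, sub_zero]
    exact Dvd.dvd.mul_right (Dvd.dvd.mul_right (hj _ (by simp)) _) _

lemma wq_reindex (p : ℕ) (hp : 0 < p) (g : ℕ → ℂ) :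
    ∑ n ∈ Finset.range (p * p), g n =
      ∑ v ∈ Finset.range p, ∑ u ∈ Finset.range p, g (u + p * v) := by
  rw [← Finset.sum_product']
  apply Finset.sum_nbij' (i := fun n => (n / p, n % p)) (j := fun z => z.2 + p * z.1)
  · intro n hn
    simp only [Finset.mem_range] at hn
    simp only [Finset.mem_product, Finset.mem_range]
    exact ⟨Nat.div_lt_iff_lt_mul hp |>.2 (by omega), Nat.mod_lt _ hp⟩
  · intro z hz
    simp only [Finset.mem_product, Finset.mem_range] at hz
    simp only [Finset.mem_range]
    calc z.2 + p * z.1 < p + p * z.1 := by omega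
    _ = p * (z.1 + 1) := by ring
    _ ≤ p * p := Nat.mul_le_mul_left p hz.1
  · intro n hn
    exact (Nat.mod_add_div n p)
  · intro z hz
    simp only [Finset.mem_product, Finset.mem_range] at hz
    have h1 : (z.2 + p * z.1) / p = z.1 := by
      rw [Nat.add_mul_div_left _ _ hp, Nat.div_eq_of_lt hz.2]
      omega
    have h2 : (z.2 + p * z.1) % p = z.2 := by
      rw [Nat.add_mul_mod_self_left, Nat.mod_eq_of_lt hz.2]
    simp [h1, h2]
  · intro n hn
    rw [Nat.mod_add_div n p]

lemma wq_complete_sum (d : ℕ) (hd : 2 ≤ d) (p : ℕ) (hp : p.Prime) (hp2 : p ≠ 2)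
    (a : Fin d → ℤ)
    (h0 : (p : ℤ) ∣ a ⟨0, by omega⟩) (h1 : (p : ℤ) ∣ (a ⟨1, by omega⟩ - 1))
    (hj : ∀ j : Fin d, 2 ≤ (j : ℕ) → (p : ℤ) ∣ a j) :
    ∑ n ∈ Finset.range (p * p), wqE (p ^ 2) (wqPoly d a n) = (p : ℂ) := by
  have hppos : 0 < p := hp.pos
  have hpne : p ≠ 0 := hppos.ne'
  rw [wq_reindex p hppos, Finset.sum_comm]
  have hterm : ∀ u v : ℕ,
      wqE (p ^ 2) (wqPoly d a ((u + p * v : ℕ) : ℤ)) =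
        wqE (p ^ 2) (wqPoly d a (u : ℤ)) * wqE p (wqDPoly d a (u : ℤ) * v) := by
    intro u v
    obtain ⟨c, hc⟩ := wq_taylor d a (u : ℤ) ((p : ℤ) * v)
    have hcast : ((u + p * v : ℕ) : ℤ) = (u : ℤ) + (p : ℤ) * v := by push_cast; ring
    rw [hcast, hc]
    have hstep : wqE (p ^ 2)
        (wqPoly d a (u : ℤ) + wqDPoly d a (u : ℤ) * ((p : ℤ) * v) + ((p : ℤ) * v) ^ 2 * c) =
        wqE (p ^ 2) (wqPoly d a (u : ℤ) + (p : ℤ) * (wqDPoly d a (u : ℤ) * v)) := by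
      apply wqE_congr _ (pow_ne_zero 2 hpne)
      push_cast
      exact ⟨(v : ℤ) ^ 2 * c, by ring⟩
    rw [hstep, wqE_split p hpne]
  have hinner : ∀ u ∈ Finset.range p,
      (∑ v ∈ Finset.range p, wqE (p ^ 2) (wqPoly d a ((u + p * v : ℕ) : ℤ)))
        = if u = 0 then wqE (p ^ 2) (wqPoly d a (u : ℤ)) * (p : ℂ) else 0 := by
    intro u hu
    simp only [Finset.mem_range] at hu
    have hfac : (∑ v ∈ Finset.range p, wqE (p ^ 2) (wqPoly d a ((u + p * v : ℕ) : ℤ)))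
        = wqE (p ^ 2) (wqPoly d a (u : ℤ)) *
            ∑ v ∈ Finset.range p, wqE p (wqDPoly d a (u : ℤ) * v) := by
      rw [Finset.mul_sum]
      exact Finset.sum_congr rfl fun v _ => hterm u v
    rw [hfac, wqE_geom p hppos]
    have hiff : ((p : ℤ) ∣ wqDPoly d a (u : ℤ)) ↔ u = 0 := by
      constructor
      · intro hdv
        have h2u : (p : ℤ) ∣ 2 * (u : ℤ) := by
          have := dvd_sub hdv (wq_dvd_dpoly d hd p a h0 h1 hj (u : ℤ))
          simpa using this
        rcases (Int.Prime.dvd_mul' hp h2u) with h2 | hu'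
        · exfalso
          have h2' : (p : ℕ) ∣ 2 := by exact_mod_cast h2
          have := Nat.le_of_dvd (by norm_num) h2'
          have := hp.two_le
          omega
        · have hdu : p ∣ u := Int.ofNat_dvd.1 (by exact_mod_cast hu')
          exact Nat.eq_zero_of_dvd_of_lt hdu hu
      · intro h
        subst h
        have := wq_dvd_dpoly d hd p a h0 h1 hj (0 : ℤ)
        simpa using this
    by_cases h : u = 0
    · rw [if_pos (hiff.2 h), if_pos h]
    · rw [if_neg (fun hc => h (hiff.1 hc)), if_neg h, mul_zero]
  rw [Finset.sum_congr rfl hinner]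
  rw [Finset.sum_ite_eq' (Finset.range p) 0
    (fun u => wqE (p ^ 2) (wqPoly d a (u : ℤ)) * (p : ℂ))]
  rw [if_pos (Finset.mem_range.2 hppos)]
  have hpoly0 : wqPoly d a ((0 : ℕ) : ℤ) = 0 := by
    simp [wqPoly]
  rw [hpoly0, wqE_zero, one_mul]

lemma wq_shift_period (E : ℕ → ℂ) (q : ℕ) (hE : ∀ n, E (n + q) = E n) :
    ∀ (k n : ℕ), E (n + k * q) = E n := by
  intro k
  induction k with
  | zero => simp
  | succ k ih =>
    intro n
    have h : n + (k + 1) * q = (n + k * q) + q := by ring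
    rw [h, hE, ih]

lemma wq_Icc_eq_Ioc (m : ℕ) : Finset.Icc 1 m = Finset.Ioc 0 m := by
  ext n; simp [Nat.lt_iff_add_one_le]

lemma wq_periodic_sum (E : ℕ → ℂ) (q : ℕ) (hE : ∀ n, E (n + q) = E n) (T : ℕ) :
    ∑ n ∈ Finset.Icc 1 (T * q), E n = (T : ℂ) * ∑ n ∈ Finset.Icc 1 q, E n := by
  induction T with
  | zero => simp
  | succ T ih =>
    have hsplit : ∑ n ∈ Finset.Ioc 0 (T * q), E n + ∑ n ∈ Finset.Ioc (T * q) (T * q + q), E n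
        = ∑ n ∈ Finset.Ioc 0 (T * q + q), E n :=
      Finset.sum_Ioc_consecutive E (Nat.zero_le _) (Nat.le_add_right _ _)
    have hshift : ∑ n ∈ Finset.Ioc (T * q) (T * q + q), E n = ∑ n ∈ Finset.Ioc 0 q, E n := by
      have hmap : Finset.Ioc (T * q) (T * q + q) =
          Finset.map (addLeftEmbedding (T * q)) (Finset.Ioc 0 q) := by
        rw [Finset.map_add_left_Ioc, Nat.add_zero]
      rw [hmap, Finset.sum_map]
      refine Finset.sum_congr rfl fun n _ => ?_
      have h : addLeftEmbedding (T * q) n = n + T * q := by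
        simp [addLeftEmbedding_apply, Nat.add_comm]
      rw [h, wq_shift_period E q hE T n]
    have hT : (T + 1) * q = T * q + q := by ring
    rw [wq_Icc_eq_Ioc, hT, ← hsplit, ← wq_Icc_eq_Ioc, ih, hshift, ← wq_Icc_eq_Ioc]
    push_cast
    ring

lemma wq_Icc_eq_range (E : ℕ → ℂ) (q : ℕ) (hE : ∀ n, E (n + q) = E n) :
    ∑ n ∈ Finset.Icc 1 q, E n = ∑ n ∈ Finset.range q, E n := by
  have hr : Finset.range (q + 1) = Finset.Icc 0 q := by
    ext n; simp [Nat.lt_succ_iff]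
  have hins : Finset.Icc 0 q = insert 0 (Finset.Icc 1 q) := by
    ext n; simp; omega
  have h0 : (0 : ℕ) ∉ Finset.Icc 1 q := by simp
  have key : ∑ n ∈ Finset.range q, E n + E q = E 0 + ∑ n ∈ Finset.Icc 1 q, E n := by
    rw [← Finset.sum_range_succ, hr, hins, Finset.sum_insert h0]
  have hEq : E q = E 0 := by
    have := hE 0
    simpa using this
  rw [hEq] at key
  rw [add_comm (E 0) _] at key
  exact (add_right_cancel key).symm

lemma wq_weylSum_rat (d : ℕ) (a : Fin d → ℤ) (q : ℕ) (N : ℕ) :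
    weylSum d (fun j => (a j : ℝ) / (q : ℝ)) N =
      ∑ n ∈ Finset.Icc 1 N, wqE q (wqPoly d a (n : ℤ)) := by
  refine Finset.sum_congr rfl fun n _ => ?_
  rw [wqE]
  congr 1
  have hpoly : ((wqPoly d a (n : ℤ) : ℤ) : ℂ) = ∑ j : Fin d, (a j : ℂ) * (n : ℂ) ^ ((j : ℕ) + 1) := by
    push_cast [wqPoly]
    rfl
  rw [hpoly, Finset.sum_div]
  congr 1
  refine Finset.sum_congr rfl fun j _ => ?_
  push_cast
  ring

lemma wq_continuous (d : ℕ) (N : ℕ) : Continuous fun x : Fin d → ℝ => weylSum d x N := by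
  unfold weylSum
  refine continuous_finset_sum _ fun n _ => Complex.continuous_exp.comp ?_
  refine Continuous.mul continuous_const (continuous_finset_sum _ fun j _ => ?_)
  exact (Complex.continuous_ofReal.comp (continuous_apply j)).mul continuous_const

/-- Density of points with infinitely many large Weyl sums. -/
lemma wq_exists_large (d : ℕ) (hd : 2 ≤ d) (α : ℝ) (hα1 : α < 1) (M : ℕ)
    (t : Fin d → ℝ) (ε : ℝ) (hε : 0 < ε) :
    ∃ y : Fin d → ℝ, (∀ j, |y j - t j| < ε) ∧
      ∃ N, M ≤ N ∧ (N : ℝ) ^ α < ‖weylSum d y N‖ := by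
  -- choose a large prime
  obtain ⟨p, hple, hp⟩ := Nat.exists_infinite_primes (max 3 (⌈2 / ε⌉₊ + 1))
  have hp3 : 3 ≤ p := le_trans (le_max_left _ _) hple
  have hp2 : p ≠ 2 := by omega
  have hppos : 0 < p := by omega
  have hpR : (0 : ℝ) < p := by exact_mod_cast hppos
  have hpbig : 2 / ε < (p : ℝ) := by
    have h1 : (⌈2 / ε⌉₊ + 1 : ℕ) ≤ p := le_trans (le_max_right _ _) hple
    have h2 : 2 / ε ≤ (⌈2 / ε⌉₊ : ℝ) := Nat.le_ceil _
    have h3 : ((⌈2 / ε⌉₊ + 1 : ℕ) : ℝ) ≤ (p : ℝ) := by exact_mod_cast h1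
    push_cast at h3
    linarith
  have hclose : 2 / (p : ℝ) < ε := by
    rw [div_lt_iff₀ hpR]
    rw [div_lt_iff₀ hε] at hpbig
    linarith [hpbig]
  -- the rational point
  set a : Fin d → ℤ := fun j => p * ⌊t j * p⌋ + (if (j : ℕ) = 1 then 1 else 0) with ha
  set y : Fin d → ℝ := fun j => (a j : ℝ) / ((p ^ 2 : ℕ) : ℝ) with hy
  have hq2R : ((p ^ 2 : ℕ) : ℝ) = (p : ℝ) ^ 2 := by push_cast; ring
  have hyclose : ∀ j, |y j - t j| < ε := by
    intro j
    have hfl : |(⌊t j * p⌋ : ℝ) - t j * p| ≤ 1 := by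
      have h1 := Int.floor_le (t j * p)
      have h2 := Int.sub_one_lt_floor (t j * p)
      rw [abs_le]
      constructor <;> linarith
    have hif : |(if (j : ℕ) = 1 then (1 : ℤ) else 0 : ℤ)| ≤ 1 := by
      split <;> simp
    have hnum : |(a j : ℝ) - t j * (p : ℝ) ^ 2| ≤ (p : ℝ) + 1 := by
      rw [ha]
      have : ((p * ⌊t j * p⌋ + (if (j : ℕ) = 1 then 1 else 0) : ℤ) : ℝ) - t j * (p : ℝ) ^ 2
          = (p : ℝ) * ((⌊t j * p⌋ : ℝ) - t j * p) + ((if (j : ℕ) = 1 then (1 : ℤ) else 0 : ℤ) : ℝ) := by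
        push_cast
        split <;> ring
      rw [this]
      calc |(p : ℝ) * ((⌊t j * p⌋ : ℝ) - t j * p) + ((if (j : ℕ) = 1 then (1 : ℤ) else 0 : ℤ) : ℝ)|
          ≤ |(p : ℝ) * ((⌊t j * p⌋ : ℝ) - t j * p)| + |((if (j : ℕ) = 1 then (1 : ℤ) else 0 : ℤ) : ℝ)| :=
            abs_add_le _ _
        _ ≤ (p : ℝ) * 1 + 1 := by
            gcongr
            · rw [abs_mul, abs_of_pos hpR]
              exact mul_le_mul_of_nonneg_left hfl (le_of_lt hpR) |>.trans (by ring_nf; rfl)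
            · exact_mod_cast hif
        _ = (p : ℝ) + 1 := by ring
    have hp1R : (1 : ℝ) ≤ (p : ℝ) := by exact_mod_cast hppos
    have hdiffeq : y j - t j = ((a j : ℝ) - t j * (p : ℝ) ^ 2) / (p : ℝ) ^ 2 := by
      simp only [hy]
      rw [hq2R]
      field_simp
    have hthis : |y j - t j| = |(a j : ℝ) - t j * (p : ℝ) ^ 2| / (p : ℝ) ^ 2 := by
      rw [hdiffeq, abs_div, abs_of_pos (by positivity : (0:ℝ) < (p:ℝ)^2)]
    rw [hthis]
    calc |(a j : ℝ) - t j * (p : ℝ) ^ 2| / (p : ℝ) ^ 2 ≤ ((p : ℝ) + 1) / (p : ℝ) ^ 2 := by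
          gcongr
      _ ≤ 2 * (p : ℝ) / (p : ℝ) ^ 2 := by
          gcongr
          linarith [hp1R]
      _ = 2 / (p : ℝ) := by
          field_simp
      _ < ε := hclose
  -- congruence conditions
  have h0 : (p : ℤ) ∣ a ⟨0, by omega⟩ := by
    rw [ha]
    simp
  have h1 : (p : ℤ) ∣ (a ⟨1, by omega⟩ - 1) := by
    rw [ha]
    simp
  have hjj : ∀ j : Fin d, 2 ≤ (j : ℕ) → (p : ℤ) ∣ a j := by
    intro j hjge
    rw [ha]
    have : ¬((j : ℕ) = 1) := by omega
    simp [this]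
  -- the Weyl sum at the rational point
  set E : ℕ → ℂ := fun n => wqE (p ^ 2) (wqPoly d a (n : ℤ)) with hE
  have hEper : ∀ n, E (n + p ^ 2) = E n := by
    intro n
    rw [hE]
    obtain ⟨c, hc⟩ := wq_taylor d a (n : ℤ) ((p ^ 2 : ℕ) : ℤ)
    have hcast : ((n + p ^ 2 : ℕ) : ℤ) = (n : ℤ) + ((p ^ 2 : ℕ) : ℤ) := by push_cast; ring
    simp only [hcast, hc]
    apply wqE_congr _ (by positivity)
    refine ⟨wqDPoly d a (n : ℤ) + ((p ^ 2 : ℕ) : ℤ) * c, ?_⟩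
    push_cast
    ring
  have hbase : ∑ n ∈ Finset.Icc 1 (p ^ 2), E n = (p : ℂ) := by
    rw [wq_Icc_eq_range E _ hEper]
    have : Finset.range (p ^ 2) = Finset.range (p * p) := by rw [sq]
    rw [this, hE]
    exact wq_complete_sum d hd p hp hp2 a h0 h1 hjj
  have hweyl : ∀ T : ℕ, weylSum d y (T * p ^ 2) = (T : ℂ) * (p : ℂ) := by
    intro T
    have := wq_weylSum_rat d a (p ^ 2) (T * p ^ 2)
    rw [hy]
    rw [this, ← hE, wq_periodic_sum E _ hEper, hbase]
  -- choose T
  have htend : Tendsto (fun T : ℕ => (T : ℝ) ^ ((1 : ℝ) - α)) atTop atTop :=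
    (tendsto_rpow_atTop (by linarith)).comp tendsto_natCast_atTop_atTop
  obtain ⟨T, hTprop⟩ := ((htend.eventually_gt_atTop (((p : ℝ) ^ 2) ^ α)).and
    (eventually_ge_atTop (max M 1))).exists
  obtain ⟨hT2, hT1⟩ := hTprop
  have hT1' : 1 ≤ T := le_trans (le_max_right _ _) hT1
  have hTM : M ≤ T := le_trans (le_max_left _ _) hT1
  have hT0 : (0 : ℝ) < T := by exact_mod_cast hT1'
  refine ⟨y, hyclose, T * p ^ 2, ?_, ?_⟩
  · calc M ≤ T := hTM
      _ ≤ T * p ^ 2 := Nat.le_mul_of_pos_right T (by positivity)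
  · have habs : ‖weylSum d y (T * p ^ 2)‖ = (T : ℝ) * (p : ℝ) := by
      rw [hweyl T]
      rw [norm_mul]
      simp
    rw [habs]
    have hcast : ((T * p ^ 2 : ℕ) : ℝ) = (T : ℝ) * (p : ℝ) ^ 2 := by push_cast; ring
    rw [hcast]
    have hrpow : ((T : ℝ) * (p : ℝ) ^ 2) ^ α = (T : ℝ) ^ α * ((p : ℝ) ^ 2) ^ α :=
      Real.mul_rpow (le_of_lt hT0) (by positivity)
    rw [hrpow]
    have hTsplit : (T : ℝ) = (T : ℝ) ^ α * (T : ℝ) ^ ((1 : ℝ) - α) := by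
      rw [← Real.rpow_add hT0]
      norm_num
    calc (T : ℝ) ^ α * ((p : ℝ) ^ 2) ^ α
        < (T : ℝ) ^ α * (T : ℝ) ^ ((1 : ℝ) - α) :=
          mul_lt_mul_of_pos_left hT2 (Real.rpow_pos_of_pos hT0 α)
      _ = (T : ℝ) := hTsplit.symm
      _ ≤ (T : ℝ) * (p : ℝ) := le_mul_of_one_le_right (le_of_lt hT0) (by exact_mod_cast hppos)

lemma wq_meagre_of_closed (X : Type*) [TopologicalSpace X] (F : Set X)
    (h1 : IsClosed F) (h2 : interior F = ∅) : IsMeagre F := by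
  rw [isMeagre_iff_countable_union_isNowhereDense]
  exact ⟨{F}, by simp [h1.isNowhereDense_iff.2 h2], Set.countable_singleton _, by simp⟩

/-- For `0 < α < 1` and `d ≥ 2`, the complement `[0,1)^d \ E_{α,d}` is meagre. -/
theorem stmt1 (d : ℕ) (hd : 2 ≤ d) (α : ℝ) (hα0 : 0 < α) (hα1 : α < 1) :
    IsMeagre ((Set.univ.pi fun _ : Fin d => Set.Ico (0 : ℝ) 1) \ excSet d α) := by
  set F : ℕ → Set (Fin d → ℝ) :=
    fun M => {x | ∀ N, M ≤ N → ‖weylSum d x N‖ ≤ (N : ℝ) ^ α} with hF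
  have hsub : (Set.univ.pi fun _ : Fin d => Set.Ico (0 : ℝ) 1) \ excSet d α ⊆ ⋃ M, F M := by
    rintro x ⟨hbox, hnot⟩
    have hb : ∀ j, x j ∈ Set.Ico (0 : ℝ) 1 := fun j => hbox j (Set.mem_univ j)
    have hnf : ¬ ∃ᶠ N : ℕ in atTop, (N : ℝ) ^ α ≤ ‖weylSum d x N‖ :=
      fun h => hnot ⟨hb, h⟩
    rw [Filter.not_frequently] at hnf
    obtain ⟨M, hM⟩ := Filter.eventually_atTop.1 hnf
    exact Set.mem_iUnion.2 ⟨M, fun N hN => le_of_lt (lt_of_not_ge (hM N hN))⟩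
  refine IsMeagre.mono hsub (isMeagre_iUnion fun M => ?_)
  have hclosed : IsClosed (F M) := by
    have : F M = ⋂ N ∈ {N : ℕ | M ≤ N}, {x | ‖weylSum d x N‖ ≤ (N : ℝ) ^ α} := by
      ext x
      simp [hF]
    rw [this]
    exact isClosed_biInter fun N hN =>
      isClosed_le (continuous_norm.comp (wq_continuous d N)) continuous_const
  have hint : interior (F M) = ∅ := by
    by_contra h
    obtain ⟨x, hx⟩ := Set.nonempty_iff_ne_empty.2 h
    have hmem : F M ∈ nhds x := mem_interior_iff_mem_nhds.1 hx
    obtain ⟨ε, hε, hball⟩ := Metric.mem_nhds_iff.1 hmem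
    obtain ⟨y, hyclose, N, hNM, hlarge⟩ := wq_exists_large d hd α hα1 M x ε hε
    have hyb : y ∈ Metric.ball x ε := by
      rw [Metric.mem_ball]
      rw [dist_pi_lt_iff hε]
      intro j
      rw [Real.dist_eq]
      exact hyclose j
    have hyF : y ∈ F M := hball hyb
    exact absurd (hyF N hNM) (not_le.2 hlarge)
  exact wq_meagre_of_closed _ (F M) hclosed hint
end

section
/- For each integer d ≥ 2, let Ξ_d = {x ∈ [0,1)^d : for every ε > 0 one has |S_d(x; N)| ≥ N^{1−ε} for infinitely many N ∈ ℕ}. Then the complement [0,1)^d \ Ξ_d is a set of the first Baire category (meagre) in the torus T_d. -/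
open Filter

/-- `Ξ_d`: points of `[0,1)^d` such that for every `ε > 0` one has
`|S_d(x;N)| ≥ N^{1-ε}` for infinitely many `N`. -/
def XiSet (d : ℕ) : Set (Fin d → ℝ) :=
  {x | (∀ j, x j ∈ Set.Ico (0 : ℝ) 1) ∧
    ∀ ε : ℝ, 0 < ε →
      ∃ᶠ N : ℕ in atTop, (N : ℝ) ^ ((1 : ℝ) - ε) ≤ ‖weylSum d x N‖}

open Polynomial Finset

lemma aux_cyclo {q : ℕ} (hq : q.Prime) (c : ℕ → ℕ)
    (hsum : ∑ r ∈ Finset.range q, c r = q) (h2 : 2 ≤ c 0) :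
    ∑ r ∈ Finset.range q, (c r : ℂ) * Complex.exp (2 * Real.pi * Complex.I / q) ^ r ≠ 0 := by
  haveI : Fact q.Prime := ⟨hq⟩
  set ζ : ℂ := Complex.exp (2 * Real.pi * Complex.I / q) with hζdef
  have hζ : IsPrimitiveRoot ζ q := Complex.isPrimitiveRoot_exp q hq.ne_zero
  intro h0
  set P : ℚ[X] := ∑ r ∈ Finset.range q, C (c r : ℚ) * X ^ r with hPdef
  have hPeval : aeval ζ P = 0 := by
    rw [hPdef, map_sum]
    rw [← h0]
    apply Finset.sum_congr rfl
    intro r _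
    simp [mul_comm]
  have hdvd := minpoly.dvd ℚ ζ hPeval
  rw [← Polynomial.cyclotomic_eq_minpoly_rat hζ hq.pos] at hdvd
  have hP1 : P.eval 1 = (q : ℚ) := by
    rw [hPdef, eval_finset_sum]
    simp only [eval_mul, eval_C, eval_pow, eval_X, one_pow, mul_one]
    rw [← Nat.cast_sum, hsum]
  have hPne : P ≠ 0 := by
    intro h
    rw [h] at hP1
    simp at hP1
    exact hq.ne_zero (Nat.cast_injective hP1.symm)
  obtain ⟨R, hR⟩ := hdvd
  have hΦne : cyclotomic q ℚ ≠ 0 := cyclotomic_ne_zero q ℚ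
  have hRne : R ≠ 0 := by
    intro h; rw [h, mul_zero] at hR; exact hPne hR
  have hdegP : P.natDegree ≤ q - 1 := by
    rw [hPdef]
    refine le_trans (Polynomial.natDegree_sum_le _ _) ?_
    rw [Finset.fold_max_le]
    refine ⟨Nat.zero_le _, ?_⟩
    intro r hr
    exact le_trans (natDegree_C_mul_X_pow_le _ _) (Nat.le_sub_one_of_lt (Finset.mem_range.mp hr))
  have hdegΦ : (cyclotomic q ℚ).natDegree = q - 1 := by
    rw [natDegree_cyclotomic, Nat.totient_prime hq]
  have hdegmul : P.natDegree = q - 1 + R.natDegree := by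
    rw [hR, natDegree_mul hΦne hRne, hdegΦ]
  have hRdeg : R.natDegree = 0 := by omega
  obtain ⟨u, hu⟩ := natDegree_eq_zero.mp hRdeg
  have hcoeff : ∀ r < q, (c r : ℚ) = u := by
    intro r hr
    have h1 : P.coeff r = (c r : ℚ) := by
      rw [hPdef, finset_sum_coeff]
      simp only [coeff_C_mul, coeff_X_pow]
      rw [Finset.sum_eq_single r]
      · simp
      · intro b _ hb; simp [Ne.symm hb]
      · intro h; exact absurd (Finset.mem_range.mpr hr) h
    have h2' : P.coeff r = u := by
      rw [hR, ← hu, coeff_mul_C, cyclotomic_prime ℚ q, finset_sum_coeff]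
      simp only [coeff_X_pow]
      rw [Finset.sum_eq_single r]
      · simp
      · intro b _ hb; simp [Ne.symm hb]
      · intro h; exact absurd (Finset.mem_range.mpr hr) h
    rw [← h1, h2']
  have hqQ : (q : ℚ) = q * u := by
    calc (q : ℚ) = ∑ r ∈ Finset.range q, (c r : ℚ) := by rw [← Nat.cast_sum, hsum]
    _ = ∑ r ∈ Finset.range q, u := Finset.sum_congr rfl (fun r hr => hcoeff r (Finset.mem_range.mp hr))
    _ = q * u := by rw [Finset.sum_const, Finset.card_range, nsmul_eq_mul]
  have hu1 : u = 1 := by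
    have hq0 : (q : ℚ) ≠ 0 := Nat.cast_ne_zero.mpr hq.ne_zero
    field_simp at hqQ
    linarith [hqQ]
  have := hcoeff 0 hq.pos
  rw [hu1] at this
  have : c 0 = 1 := Nat.cast_injective (by exact_mod_cast this)
  omega



def polyF (d : ℕ) (a : Fin d → ℤ) (n : ℕ) : ℤ := ∑ j : Fin d, a j * (n : ℤ) ^ ((j : ℕ) + 1)

lemma zpow_congr_mod {q : ℕ} {ζ : ℂ} (hζ0 : ζ ≠ 0) (hζ : ζ ^ (q : ℕ) = 1) {A B : ℤ}
    (h : (q : ℤ) ∣ A - B) : ζ ^ A = ζ ^ B := by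
  obtain ⟨k, hk⟩ := h
  have : A = B + (q : ℤ) * k := by linarith
  rw [this, zpow_add₀ hζ0, zpow_mul, zpow_natCast, hζ, one_zpow, mul_one]

lemma weyl_term (d q : ℕ) (hq : q ≠ 0) (a : Fin d → ℤ) (n : ℕ) :
    Complex.exp (2 * (Real.pi : ℂ) * Complex.I *
      ∑ j : Fin d, (((a j : ℝ) / q : ℝ) : ℂ) * (n : ℂ) ^ ((j : ℕ) + 1)) =
    Complex.exp (2 * Real.pi * Complex.I / q) ^ (polyF d a n) := by
  rw [← Complex.exp_int_mul]
  congr 1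
  have hq' : (q : ℂ) ≠ 0 := Nat.cast_ne_zero.mpr hq
  rw [polyF]
  push_cast
  rw [Finset.mul_sum, Finset.sum_mul]
  apply Finset.sum_congr rfl
  intro j _
  field_simp

lemma weylSum_eq_zeta (d q : ℕ) (hq : q ≠ 0) (a : Fin d → ℤ) (N : ℕ) :
    weylSum d (fun j => (a j : ℝ) / q) N =
      ∑ n ∈ Finset.Icc 1 N, Complex.exp (2 * Real.pi * Complex.I / q) ^ (polyF d a n) := by
  unfold weylSum
  exact Finset.sum_congr rfl fun n _ => weyl_term d q hq a n

lemma polyF_mod (d q : ℕ) (a : Fin d → ℤ) (m n : ℕ) :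
    (q : ℤ) ∣ polyF d a (m * q + n) - polyF d a n := by
  have : ((polyF d a (m * q + n) - polyF d a n : ℤ) : ZMod q) = 0 := by
    unfold polyF
    push_cast
    have : ((q : ZMod q)) = 0 := ZMod.natCast_self q
    rw [this]
    simp
  exact (ZMod.intCast_zmod_eq_zero_iff_dvd _ _).mp this

lemma weylSum_periodic (d q : ℕ) (hq : q ≠ 0) (a : Fin d → ℤ) (m : ℕ) :
    weylSum d (fun j => (a j : ℝ) / q) (m * q) =
      (m : ℂ) * weylSum d (fun j => (a j : ℝ) / q) q := by
  set ζ : ℂ := Complex.exp (2 * Real.pi * Complex.I / q) with hζdef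
  have hζ0 : ζ ≠ 0 := Complex.exp_ne_zero _
  have hζq : ζ ^ q = 1 := by
    rw [hζdef, ← Complex.exp_nat_mul]
    have hq' : (q : ℂ) ≠ 0 := Nat.cast_ne_zero.mpr hq
    rw [mul_div_assoc']
    rw [mul_comm (q : ℂ) _, mul_div_assoc, div_self hq', mul_one]
    exact Complex.exp_two_pi_mul_I
  rw [weylSum_eq_zeta d q hq a, weylSum_eq_zeta d q hq a]
  induction m with
  | zero => simp
  | succ m ih =>
    have h1 : (1 : ℕ) ≤ m * q + 1 := by omega
    have hIcc : ∀ N : ℕ, Finset.Icc 1 N = Finset.Ioc 0 N := fun N => by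
      rw [← Finset.Icc_add_one_left_eq_Ioc, zero_add]
    rw [hIcc]
    have hsplit := Finset.sum_Ioc_consecutive (fun n => ζ ^ polyF d a n)
      (Nat.zero_le (m * q)) (Nat.mul_le_mul_right q (Nat.le_succ m))
    rw [← hsplit, ← hIcc, ih]
    have : ∑ n ∈ Finset.Ioc (m * q) ((m + 1) * q), ζ ^ polyF d a n
        = ∑ n ∈ Finset.Ioc 0 q, ζ ^ polyF d a n := by
      have : Finset.Ioc (m * q) ((m + 1) * q) = Finset.map (addLeftEmbedding (m * q)) (Finset.Ioc 0 q) := by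
        rw [Finset.map_add_left_Ioc]
        congr 1 <;> ring
      rw [this, Finset.sum_map]
      apply Finset.sum_congr rfl
      intro n _
      simp only [addLeftEmbedding_apply]
      exact zpow_congr_mod hζ0 hζq (polyF_mod d q a m n)
    rw [this, ← hIcc]
    push_cast
    ring

lemma zeta_pow_q (q : ℕ) (hq : q ≠ 0) : Complex.exp (2 * Real.pi * Complex.I / q) ^ q = 1 := by
  rw [← Complex.exp_nat_mul]
  have hq' : (q : ℂ) ≠ 0 := Nat.cast_ne_zero.mpr hq
  rw [mul_div_assoc']
  rw [mul_comm (q : ℂ) _, mul_div_assoc, div_self hq', mul_one]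
  exact Complex.exp_two_pi_mul_I

lemma weyl_q_ne_zero (d q : ℕ) (hq : q.Prime) (a : Fin d → ℤ) (n₀ : ℕ)
    (h1 : 1 ≤ n₀) (h2 : n₀ < q)
    (hcong : ((polyF d a n₀ : ℤ) : ZMod q) = 0) :
    weylSum d (fun j => (a j : ℝ) / q) q ≠ 0 := by
  haveI : NeZero q := ⟨hq.ne_zero⟩
  set ζ : ℂ := Complex.exp (2 * Real.pi * Complex.I / q) with hζdef
  have hζ0 : ζ ≠ 0 := Complex.exp_ne_zero _
  have hζq : ζ ^ q = 1 := zeta_pow_q q hq.ne_zero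
  rw [weylSum_eq_zeta d q hq.ne_zero a]
  set v : ℕ → ℕ := fun n => ((polyF d a n : ZMod q)).val with hvdef
  have hvlt : ∀ n, v n < q := fun n => ZMod.val_lt _
  have hterm : ∀ n, ζ ^ polyF d a n = ζ ^ (v n) := by
    intro n
    rw [← zpow_natCast ζ (v n)]
    apply zpow_congr_mod hζ0 hζq
    have : ((v n : ℤ)) = polyF d a n % q := by
      rw [hvdef]
      exact_mod_cast ZMod.val_intCast (polyF d a n)
    rw [this]
    exact Int.dvd_self_sub_of_emod_eq rfl
  rw [Finset.sum_congr rfl (fun n _ => hterm n)]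
  rw [Finset.sum_comp (fun r => ζ ^ r) v]
  set c : ℕ → ℕ := fun r => #(Finset.filter (fun n => v n = r) (Finset.Icc 1 q)) with hcdef
  have himsub : Finset.image v (Finset.Icc 1 q) ⊆ Finset.range q := by
    intro r hr
    obtain ⟨n, _, hn⟩ := Finset.mem_image.mp hr
    rw [← hn]; exact Finset.mem_range.mpr (hvlt n)
  have hext : ∑ b ∈ Finset.image v (Finset.Icc 1 q), c b • ζ ^ b
      = ∑ r ∈ Finset.range q, (c r : ℂ) * ζ ^ r := by
    rw [Finset.sum_subset himsub]
    · apply Finset.sum_congr rfl; intro r _; rw [nsmul_eq_mul]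
    · intro r _ hr
      have : c r = 0 := by
        rw [hcdef]
        simp only [Finset.card_eq_zero]
        rw [Finset.filter_eq_empty_iff]
        intro n hn hvn
        exact hr (Finset.mem_image.mpr ⟨n, hn, hvn⟩)
      rw [this, zero_smul]
  rw [hext]
  apply aux_cyclo hq c
  · rw [hcdef]
    have := Finset.card_eq_sum_card_fiberwise (f := v) (s := Finset.Icc 1 q)
      (t := Finset.range q) (fun n _ => Finset.mem_range.mpr (hvlt n))
    rw [← this, Nat.card_Icc]
    omega
  · have hq0 : v q = 0 := by
      rw [hvdef]
      have : ((polyF d a q : ℤ) : ZMod q) = 0 := by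
        unfold polyF
        push_cast
        rw [ZMod.natCast_self]
        apply Finset.sum_eq_zero
        intro j _
        rw [zero_pow (Nat.succ_ne_zero _), mul_zero]
      simp only [this, ZMod.val_zero]
    have hn0 : v n₀ = 0 := by rw [hvdef]; simp only [hcong, ZMod.val_zero]
    have hsub : ({n₀, q} : Finset ℕ) ⊆ Finset.filter (fun n => v n = 0) (Finset.Icc 1 q) := by
      intro n hn
      rcases Finset.mem_insert.mp hn with h | h
      · subst h; exact Finset.mem_filter.mpr ⟨Finset.mem_Icc.mpr ⟨h1, le_of_lt h2⟩, hn0⟩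
      · rw [Finset.mem_singleton.mp h]
        exact Finset.mem_filter.mpr ⟨Finset.mem_Icc.mpr ⟨hq.one_lt.le.trans' (by omega), le_refl q⟩, hq0⟩
    have : ({n₀, q} : Finset ℕ).card = 2 := Finset.card_pair (by omega)
    calc 2 = ({n₀, q} : Finset ℕ).card := this.symm
    _ ≤ _ := Finset.card_le_card hsub


lemma exists_good (d : ℕ) (hd : 2 ≤ d) (y : Fin d → ℝ) (r : ℝ) (hr : 0 < r) :
    ∃ (q n₀ : ℕ) (a : Fin d → ℤ), q.Prime ∧ 1 ≤ n₀ ∧ n₀ < q ∧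
      ((polyF d a n₀ : ℤ) : ZMod q) = 0 ∧ ∀ j, |(a j : ℝ) / q - y j| < r := by
  obtain ⟨n₀, hn₀pos, hn₀r⟩ : ∃ n₀ : ℕ, 0 < n₀ ∧ 2 / r < (n₀ : ℝ) := by
    refine ⟨⌈2 / r⌉₊ + 1, Nat.succ_pos _, ?_⟩
    have := Nat.le_ceil (2 / r)
    push_cast
    linarith
  obtain ⟨q, hqge, hq⟩ := Nat.exists_infinite_primes (n₀ + 1 + ⌈2 * ((n₀ : ℝ) + 1) / r⌉₊)
  haveI : Fact q.Prime := ⟨hq⟩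
  haveI : NeZero q := ⟨hq.ne_zero⟩
  have hqn₀ : n₀ < q := by omega
  have hqpos : (0 : ℝ) < q := by exact_mod_cast hq.pos
  have hn₀posR : (0 : ℝ) < n₀ := by exact_mod_cast hn₀pos
  have hqR : 2 * ((n₀ : ℝ) + 1) / r ≤ (q : ℝ) := by
    calc 2 * ((n₀ : ℝ) + 1) / r ≤ (⌈2 * ((n₀ : ℝ) + 1) / r⌉₊ : ℝ) := Nat.le_ceil _
    _ ≤ (q : ℝ) := by
      have h' : ⌈2 * ((n₀ : ℝ) + 1) / r⌉₊ ≤ q := by omega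
      exact_mod_cast h'
  have hqr : 2 * ((n₀ : ℝ) + 1) ≤ (q : ℝ) * r := by
    rw [div_le_iff₀ hr] at hqR; linarith
  have hn₀ge1 : (1 : ℝ) ≤ (n₀ : ℝ) := by exact_mod_cast hn₀pos
  have hinvq : 1 / (q : ℝ) ≤ r / 4 := by
    rw [div_le_iff₀ hqpos]
    nlinarith
  have hn₀q : (n₀ : ℝ) / q < r / 2 := by
    rw [div_lt_iff₀ hqpos]
    nlinarith
  have hinvn₀ : 1 / (n₀ : ℝ) < r / 2 := by
    rw [div_lt_iff₀ hr] at hn₀r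
    rw [div_lt_iff₀ hn₀posR]
    nlinarith
  have h0d : 0 < d := by omega
  have h1d : 1 < d := by omega
  set j0 : Fin d := ⟨0, h0d⟩
  set j1 : Fin d := ⟨1, h1d⟩
  set A : ℤ := ⌈y j0 * q⌉ with hAdef
  set b₁ : ℤ := ⌈y j1 * q⌉ with hb₁def
  set Cc : ℤ := ∑ j ∈ Finset.univ.filter (fun j : Fin d => 2 ≤ (j : ℕ)), ⌈y j * q⌉ * (n₀ : ℤ) ^ ((j : ℕ) + 1) with hCdef
  set D : ℤ := A * n₀ + b₁ * n₀ ^ 2 + Cc with hDdef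
  have hn₀ne : ((n₀ : ℕ) : ZMod q) ≠ 0 := by
    rw [Ne, ZMod.natCast_eq_zero_iff]
    intro hdvd
    have := Nat.le_of_dvd hn₀pos hdvd
    omega
  set w : ℕ := (((-D : ZMod q)) * ((n₀ : ℕ) : ZMod q)⁻¹).val with hwdef
  have hwlt : w < q := ZMod.val_lt _
  set t : ℕ := w % n₀ with htdef
  set s : ℕ := w / n₀ with hsdef
  have htn₀ : t < n₀ := Nat.mod_lt _ hn₀pos
  have hts : t + n₀ * s = w := Nat.mod_add_div w n₀
  set a : Fin d → ℤ := fun j =>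
    if (j : ℕ) = 0 then A + t else if (j : ℕ) = 1 then b₁ + s else ⌈y j * q⌉ with hadef
  refine ⟨q, n₀, a, hq, hn₀pos, hqn₀, ?_, ?_⟩
  · -- congruence
    have hsplit : polyF d a n₀ = (A + t) * n₀ + (b₁ + s) * n₀ ^ 2 + Cc := by
      unfold polyF
      have huniv : (Finset.univ : Finset (Fin d)) =
          insert j0 (insert j1 (Finset.univ.filter (fun j : Fin d => 2 ≤ (j : ℕ)))) := by
        ext j
        simp only [Finset.mem_univ, true_iff, Finset.mem_insert, Finset.mem_filter, true_and]
        have hcase : (j : ℕ) = 0 ∨ (j : ℕ) = 1 ∨ 2 ≤ (j : ℕ) := by omega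
        rcases hcase with h | h | h
        · left; exact Fin.ext h
        · right; left; exact Fin.ext h
        · right; right; exact h
      have hj0ne : j0 ∉ insert j1 (Finset.univ.filter (fun j : Fin d => 2 ≤ (j : ℕ))) := by
        simp [Finset.mem_insert, Fin.ext_iff, j0, j1]
      have hj1ne : j1 ∉ (Finset.univ.filter (fun j : Fin d => 2 ≤ (j : ℕ))) := by
        simp [Fin.ext_iff, j1]
      rw [huniv, Finset.sum_insert hj0ne, Finset.sum_insert hj1ne]
      have ha0 : a j0 = A + t := by simp [hadef, j0]
      have ha1 : a j1 = b₁ + s := by simp [hadef, j1]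
      rw [ha0, ha1]
      have hsum2 : ∑ j ∈ Finset.univ.filter (fun j : Fin d => 2 ≤ (j : ℕ)), a j * (n₀ : ℤ) ^ ((j : ℕ) + 1) = Cc := by
        rw [hCdef]
        apply Finset.sum_congr rfl
        intro j hj
        have h2j : 2 ≤ (j : ℕ) := (Finset.mem_filter.mp hj).2
        have haj : a j = ⌈y j * q⌉ := by
          rw [hadef]
          simp only
          rw [if_neg (by omega), if_neg (by omega)]
        rw [haj]
      rw [hsum2]
      push_cast
      ring
    rw [hsplit]
    have hw : ((w : ℕ) : ZMod q) = (-D : ZMod q) * ((n₀ : ℕ) : ZMod q)⁻¹ := by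
      rw [hwdef]
      exact ZMod.natCast_rightInverse _
    have hexpand : ((A + t) * n₀ + (b₁ + s) * n₀ ^ 2 + Cc : ℤ) = D + n₀ * w := by
      rw [hDdef, ← hts]
      push_cast
      ring
    rw [hexpand]
    push_cast
    rw [hw]
    have : ((n₀ : ℕ) : ZMod q) * (-(D : ZMod q) * ((n₀ : ℕ) : ZMod q)⁻¹) = -(D : ZMod q) := by
      rw [mul_comm, mul_assoc, ZMod.inv_mul_of_unit, mul_one]
      exact (ZMod.unitOfCoprime n₀ (Nat.Coprime.symm (hq.coprime_iff_not_dvd.mpr (fun hdvd => by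
        have := Nat.le_of_dvd hn₀pos hdvd; omega)))).isUnit
    push_cast at this ⊢
    rw [this]
    ring
  · -- bounds
    intro j
    have hqne : (q : ℝ) ≠ 0 := ne_of_gt hqpos
    have habs : ∀ (m : ℤ) (z : ℝ) (B : ℝ), |(m : ℝ) - z * q| ≤ B → |(m : ℝ) / q - z| ≤ B / q := by
      intro m z B h
      have heq : (m : ℝ) / q - z = ((m : ℝ) - z * q) / q := by field_simp
      rw [heq, abs_div, abs_of_pos hqpos]
      gcongr
    have hceil_lb : ∀ z : ℝ, 0 ≤ ((⌈z * q⌉ : ℤ) : ℝ) - z * q := by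
      intro z
      have := Int.le_ceil (z * q); linarith
    have hceil_ub : ∀ z : ℝ, ((⌈z * q⌉ : ℤ) : ℝ) - z * q < 1 := by
      intro z
      have := Int.ceil_lt_add_one (z * q); linarith
    by_cases hj0 : (j : ℕ) = 0
    · have haj : a j = A + t := by rw [hadef]; simp [hj0]
      have hjj : j = j0 := Fin.ext hj0
      rw [haj, hjj]
      have ht' : (t : ℝ) ≤ (n₀ : ℝ) - 1 := by
        have : (t:ℝ) < n₀ := by exact_mod_cast htn₀
        have htint : t + 1 ≤ n₀ := htn₀
        have : ((t + 1 : ℕ) : ℝ) ≤ n₀ := by exact_mod_cast htint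
        push_cast at this; linarith
      have hb : |((A + t : ℤ) : ℝ) - y j0 * q| ≤ (n₀ : ℝ) := by
        rw [abs_le]
        push_cast
        constructor
        · have h1 := hceil_lb (y j0)
          rw [← hAdef] at h1
          have : (0:ℝ) ≤ t := by positivity
          linarith
        · have h2 := hceil_ub (y j0)
          rw [← hAdef] at h2
          linarith
      calc |((A + t : ℤ) : ℝ) / q - y j0| ≤ (n₀ : ℝ) / q := habs _ _ _ hb
      _ < r / 2 := hn₀q
      _ < r := by linarith
    · by_cases hj1 : (j : ℕ) = 1
      · have haj : a j = b₁ + s := by rw [hadef]; simp [hj0, hj1]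
        have hjj : j = j1 := Fin.ext hj1
        rw [haj, hjj]
        have hs' : (s : ℝ) ≤ (q : ℝ) / n₀ := by
          have hsn : s * n₀ ≤ w := by
            rw [hsdef]; exact Nat.div_mul_le_self w n₀
          have hsq : s * n₀ < q := lt_of_le_of_lt hsn hwlt
          have : ((s * n₀ : ℕ) : ℝ) ≤ q := by exact_mod_cast hsq.le
          push_cast at this
          rw [le_div_iff₀ hn₀posR]
          linarith
        have hb : |((b₁ + s : ℤ) : ℝ) - y j1 * q| ≤ 1 + (q : ℝ) / n₀ := by
          rw [abs_le]
          push_cast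
          constructor
          · have h1 := hceil_lb (y j1)
            rw [← hb₁def] at h1
            have : (0:ℝ) ≤ s := by positivity
            linarith
          · have h2 := hceil_ub (y j1)
            rw [← hb₁def] at h2
            linarith
        calc |((b₁ + s : ℤ) : ℝ) / q - y j1| ≤ (1 + (q : ℝ) / n₀) / q := habs _ _ _ hb
        _ = 1 / q + 1 / n₀ := by
          field_simp
        _ < r := by linarith
      · have haj : a j = ⌈y j * q⌉ := by
          rw [hadef]; simp only; rw [if_neg hj0, if_neg hj1]
        rw [haj]
        have hb : |((⌈y j * q⌉ : ℤ) : ℝ) - y j * q| ≤ 1 := by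
          rw [abs_le]
          exact ⟨by linarith [hceil_lb (y j)], by linarith [hceil_ub (y j)]⟩
        calc |((⌈y j * q⌉ : ℤ) : ℝ) / q - y j| ≤ 1 / q := habs _ _ _ hb
        _ ≤ r / 4 := hinvq
        _ < r := by linarith


lemma growth_aux (c : ℝ) (hc : 0 < c) (q : ℕ) (hq : 0 < q) (e : ℝ) (he0 : 0 ≤ e)
    (he : e < 1) (M : ℕ) :
    ∃ m : ℕ, M ≤ m ∧ 1 ≤ m ∧ ((m * q : ℕ) : ℝ) ^ e < (m : ℝ) * c := by
  have h1e : 0 < 1 - e := by linarith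
  set K : ℝ := (q : ℝ) ^ e / c with hKdef
  have hqpos : (0 : ℝ) < q := by exact_mod_cast hq
  have hKpos : 0 < K := by positivity
  set m : ℕ := max (max M 1) (⌊K ^ (1 / (1 - e))⌋₊ + 1) with hmdef
  have hmM : M ≤ m := le_trans (le_max_left M 1) (le_max_left _ _)
  have hm1 : 1 ≤ m := le_trans (le_max_right M 1) (le_max_left _ _)
  have hmK : K ^ (1 / (1 - e)) < (m : ℝ) := by
    have h1 : K ^ (1 / (1 - e)) < (⌊K ^ (1 / (1 - e))⌋₊ + 1 : ℕ) := by
      push_cast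
      exact Nat.lt_floor_add_one _
    exact lt_of_lt_of_le h1 (by exact_mod_cast le_trans (le_max_right (max M 1) _) (le_refl m))
  have hmpos : (0 : ℝ) < m := by
    have : (1:ℝ) ≤ m := by exact_mod_cast hm1
    linarith
  refine ⟨m, hmM, hm1, ?_⟩
  have key : K < (m : ℝ) ^ (1 - e) := by
    calc K = (K ^ (1 / (1 - e))) ^ (1 - e) := by
          rw [← Real.rpow_mul hKpos.le, one_div_mul_cancel (ne_of_gt h1e), Real.rpow_one]
    _ < (m : ℝ) ^ (1 - e) := Real.rpow_lt_rpow (Real.rpow_nonneg hKpos.le _) hmK h1e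
  have hsplit : ((m * q : ℕ) : ℝ) ^ e = (m : ℝ) ^ e * (q : ℝ) ^ e := by
    push_cast
    rw [Real.mul_rpow hmpos.le hqpos.le]
  rw [hsplit]
  have hqe : (q : ℝ) ^ e = K * c := by rw [hKdef]; field_simp
  have hm' : (m : ℝ) = (m : ℝ) ^ e * (m : ℝ) ^ (1 - e) := by
    rw [← Real.rpow_add hmpos]
    simp
  rw [hqe]
  have hme : (0 : ℝ) < (m : ℝ) ^ e := Real.rpow_pos_of_pos hmpos e
  calc (m : ℝ) ^ e * (K * c) < (m : ℝ) ^ e * ((m : ℝ) ^ (1 - e) * c) := by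
        apply mul_lt_mul_of_pos_left _ hme
        exact mul_lt_mul_of_pos_right key hc
  _ = ((m : ℝ) ^ e * (m : ℝ) ^ (1 - e)) * c := by ring
  _ = (m : ℝ) * c := by rw [← hm']

lemma nowhereDense_isMeagre {X : Type*} [TopologicalSpace X] {s : Set X}
    (h : IsNowhereDense s) : IsMeagre s :=
  isMeagre_iff_countable_union_isNowhereDense.mpr
    ⟨{s}, by simpa using h, Set.countable_singleton s, by simp⟩


/-- For `d ≥ 2`, the complement `[0,1)^d \ Ξ_d` is meagre. -/
theorem stmt2 (d : ℕ) (hd : 2 ≤ d) :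
    IsMeagre ((Set.univ.pi fun _ : Fin d => Set.Ico (0 : ℝ) 1) \ XiSet d) := by
  set F : ℕ → ℕ → Set (Fin d → ℝ) := fun k M =>
    {x | ∀ N : ℕ, M + 1 ≤ N →
      ‖weylSum d x N‖ ≤ (N : ℝ) ^ ((1 : ℝ) - 1 / ((k : ℝ) + 2))} with hFdef
  have hcont : ∀ N : ℕ, Continuous fun x : Fin d → ℝ => ‖weylSum d x N‖ := by
    intro N
    apply continuous_norm.comp
    unfold weylSum
    apply continuous_finset_sum
    intro n _
    apply Complex.continuous_exp.comp
    apply Continuous.mul continuous_const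
    apply continuous_finset_sum
    intro j _
    exact (Complex.continuous_ofReal.comp (continuous_apply j)).mul continuous_const
  have hclosed : ∀ k M, IsClosed (F k M) := by
    intro k M
    have hFeq : F k M = ⋂ N : ℕ, {x : Fin d → ℝ | M + 1 ≤ N →
        ‖weylSum d x N‖ ≤ (N : ℝ) ^ ((1 : ℝ) - 1 / ((k : ℝ) + 2))} := by
      ext x
      simp only [hFdef, Set.mem_setOf_eq, Set.mem_iInter]
    rw [hFeq]
    apply isClosed_iInter
    intro N
    by_cases h : M + 1 ≤ N
    · simp only [h, true_implies]
      exact isClosed_le (hcont N) continuous_const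
    · simp only [h, false_implies]
      exact isClosed_univ
  have hint : ∀ k M, interior (F k M) = ∅ := by
    intro k M
    rw [Set.eq_empty_iff_forall_notMem]
    intro y hy
    rw [mem_interior_iff_mem_nhds, Metric.mem_nhds_iff] at hy
    obtain ⟨r, hr, hball⟩ := hy
    obtain ⟨q, n₀, a, hq, hn₀1, hn₀q, hcong, hbound⟩ := exists_good d hd y r hr
    set x : Fin d → ℝ := fun j => (a j : ℝ) / q with hxdef
    have hxball : x ∈ Metric.ball y r := by
      rw [Metric.mem_ball, dist_pi_lt_iff hr]
      intro j
      rw [Real.dist_eq]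
      exact hbound j
    have hxF : x ∈ F k M := hball hxball
    set e : ℝ := (1 : ℝ) - 1 / ((k : ℝ) + 2) with hedef
    have hk2 : (2 : ℝ) ≤ (k : ℝ) + 2 := by
      have : (0 : ℝ) ≤ (k : ℝ) := Nat.cast_nonneg k
      linarith
    have he0 : 0 ≤ e := by
      have h1 : 1 / ((k : ℝ) + 2) ≤ 1 / 2 := one_div_le_one_div_of_le two_pos hk2
      rw [hedef]; linarith
    have he1 : e < 1 := by
      have : 0 < 1 / ((k : ℝ) + 2) := by positivity
      rw [hedef]; linarith
    have hT : weylSum d x q ≠ 0 := weyl_q_ne_zero d q hq a n₀ hn₀1 hn₀q hcong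
    have hc : 0 < ‖weylSum d x q‖ := norm_pos_iff.mpr hT
    obtain ⟨m, hmM, hm1, hlt⟩ := growth_aux _ hc q hq.pos e he0 he1 (M + 1)
    have hper : weylSum d x (m * q) = (m : ℂ) * weylSum d x q :=
      weylSum_periodic d q hq.ne_zero a m
    have hN : M + 1 ≤ m * q := le_trans hmM (Nat.le_mul_of_pos_right m hq.pos)
    have hle := hxF (m * q) hN
    rw [hper, norm_mul, Complex.norm_natCast] at hle
    push_cast at hle hlt
    linarith
  have hmeagre : ∀ k M, IsMeagre (F k M) := fun k M =>
    nowhereDense_isMeagre (((hclosed k M).isNowhereDense_iff).mpr (hint k M))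
  refine IsMeagre.mono ?_ (isMeagre_iUnion fun k => isMeagre_iUnion fun M => hmeagre k M)
  intro x hx
  obtain ⟨hx1, hx2⟩ := hx
  have hA : ∀ j, x j ∈ Set.Ico (0 : ℝ) 1 := fun j => hx1 j (Set.mem_univ j)
  have hnB : ¬ ∀ ε : ℝ, 0 < ε →
      ∃ᶠ N : ℕ in atTop, (N : ℝ) ^ ((1 : ℝ) - ε) ≤ ‖weylSum d x N‖ :=
    fun hB => hx2 ⟨hA, hB⟩
  push_neg at hnB
  obtain ⟨ε, hε, hfreq⟩ := hnB
  simp only [← not_le] at hfreq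
  rw [Filter.eventually_atTop] at hfreq
  obtain ⟨M₀, hM₀⟩ := hfreq
  set k : ℕ := ⌈1 / ε⌉₊ with hkdef
  have hkε : 1 / ((k : ℝ) + 2) ≤ ε := by
    have h1 : 1 / ε ≤ (k : ℝ) := by rw [hkdef]; exact_mod_cast Nat.le_ceil (1 / ε)
    have h2 : 1 / ε ≤ (k : ℝ) + 2 := by linarith
    have h3 : (0 : ℝ) < 1 / ε := by positivity
    calc 1 / ((k : ℝ) + 2) ≤ 1 / (1 / ε) := one_div_le_one_div_of_le h3 h2
    _ = ε := one_div_one_div ε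
  apply Set.mem_iUnion.mpr
  refine ⟨k, Set.mem_iUnion.mpr ⟨M₀, ?_⟩⟩
  intro N hNM
  have hM₀N : M₀ ≤ N := by omega
  have hlt := hM₀ N hM₀N
  rw [not_le] at hlt
  have hN1 : (1 : ℝ) ≤ (N : ℝ) := by
    have : 1 ≤ N := by omega
    exact_mod_cast this
  have hexp : (1 : ℝ) - ε ≤ (1 : ℝ) - 1 / ((k : ℝ) + 2) := by linarith
  calc ‖weylSum d x N‖ ≤ (N : ℝ) ^ ((1 : ℝ) - ε) := hlt.le
  _ ≤ (N : ℝ) ^ ((1 : ℝ) - 1 / ((k : ℝ) + 2)) :=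
      Real.rpow_le_rpow_of_exponent_le hN1 hexp
end

section
/- For each real 0 < α < 1 and each integer d ≥ 2, the complement [0,1)^d \ D_{α,d} is a set of the first Baire category (meagre) in the torus T_d. -/
open Filter
open scoped Classical

/-- The discrepancy at length `N` of a sequence `u : ℕ → ℝ` (with values thought
of in `[0,1)`):
`D_N = sup_{0 ≤ a < b ≤ 1} |#{1 ≤ n ≤ N : u n ∈ (a,b)} - (b-a)N|`. -/
noncomputable def discrepancy (u : ℕ → ℝ) (N : ℕ) : ℝ :=
  sSup {D : ℝ | ∃ a b : ℝ, 0 ≤ a ∧ a < b ∧ b ≤ 1 ∧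
    D = |(((Finset.Icc 1 N).filter fun n => u n ∈ Set.Ioo a b).card : ℝ) -
      (b - a) * N|}

/-- `D_d(x; N)`: the discrepancy of the sequence of fractional parts of
`x_1 n + x_2 n² + … + x_d n^d`. -/
noncomputable def weylDiscrepancy (d : ℕ) (x : Fin d → ℝ) (N : ℕ) : ℝ :=
  discrepancy (fun n => Int.fract (∑ j : Fin d, x j * (n : ℝ) ^ ((j : ℕ) + 1))) N

/-- `D_{α,d}`: points of `[0,1)^d` with `D_d(x;N) ≥ N^α` for infinitely many `N`. -/
def discSet (d : ℕ) (α : ℝ) : Set (Fin d → ℝ) :=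
  {x | (∀ j, x j ∈ Set.Ico (0 : ℝ) 1) ∧
    ∃ᶠ N : ℕ in atTop, (N : ℝ) ^ α ≤ weylDiscrepancy d x N}

/-- If no term of the sequence lies in `(a,b)`, the discrepancy is at least `(b-a)N`. -/
lemma disc_lower (u : ℕ → ℝ) (N : ℕ) {a b : ℝ} (ha : 0 ≤ a) (hab : a < b) (hb : b ≤ 1)
    (h : ∀ n ∈ Finset.Icc 1 N, u n ∉ Set.Ioo a b) :
    (b - a) * N ≤ discrepancy u N := by
  have hbdd : BddAbove {D : ℝ | ∃ a b : ℝ, 0 ≤ a ∧ a < b ∧ b ≤ 1 ∧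
      D = |(((Finset.Icc 1 N).filter fun n => u n ∈ Set.Ioo a b).card : ℝ) -
        (b - a) * N|} := by
    refine ⟨N, ?_⟩
    rintro D ⟨a', b', ha', hab', hb', rfl⟩
    have hc1 : (((Finset.Icc 1 N).filter fun n => u n ∈ Set.Ioo a' b').card : ℝ) ≤ N := by
      have := Finset.card_filter_le (Finset.Icc 1 N) (fun n => u n ∈ Set.Ioo a' b')
      have h2 : (Finset.Icc 1 N).card = N := by rw [Nat.card_Icc]; omega
      exact_mod_cast h2 ▸ this
    have hc0 : (0:ℝ) ≤ (((Finset.Icc 1 N).filter fun n => u n ∈ Set.Ioo a' b').card : ℝ) := by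
      positivity
    rw [abs_sub_le_iff]
    constructor <;> nlinarith [Nat.cast_nonneg (α := ℝ) N]
  apply le_csSup hbdd
  refine ⟨a, b, ha, hab, hb, ?_⟩
  rw [Finset.filter_false_of_mem h]
  simp only [Finset.card_empty, Nat.cast_zero, zero_sub, abs_neg]
  rw [abs_of_nonneg (by nlinarith [Nat.cast_nonneg (α := ℝ) N])]

/-- Fractional parts of points within `1/(8q)` of a rational with denominator `q`
avoid the interval `(3/(8q), 5/(8q))`. -/
lemma fract_avoid {q : ℕ} (hq : 1 ≤ q) {t e : ℝ} {k : ℤ}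
    (ht : t = k / q + e) (he : |e| ≤ 1 / (8 * q)) :
    Int.fract t ∉ Set.Ioo (3 / (8 * (q:ℝ))) (5 / (8 * (q:ℝ))) := by
  rintro ⟨h1, h2⟩
  have hq0 : (0:ℝ) < q := by exact_mod_cast hq
  have hf : Int.fract t = t - ⌊t⌋ := rfl
  set m : ℤ := k - q * ⌊t⌋ with hm
  have hkq : (k:ℝ) = (t - e) * q := by rw [ht]; field_simp; ring
  have hm' : (m:ℝ) = (Int.fract t - e) * q := by
    rw [hf]; push_cast [hm]; rw [hkq]; ring
  have hee : |e| * (8*(q:ℝ)) ≤ 1 := (le_div_iff₀ (by positivity)).1 he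
  have hee' : |e * (8*(q:ℝ))| ≤ 1 := by
    rwa [abs_mul, abs_of_nonneg (by positivity : (0:ℝ) ≤ 8*(q:ℝ))]
  have he2' : e * (8*(q:ℝ)) ≤ 1 := le_of_abs_le hee'
  have he1' : -1 ≤ e * (8*(q:ℝ)) := neg_le_of_abs_le hee'
  have h1' : 3 < Int.fract t * (8*(q:ℝ)) := by
    rw [div_lt_iff₀ (by positivity)] at h1; linarith
  have h2' : Int.fract t * (8*(q:ℝ)) < 5 := by
    rw [lt_div_iff₀ (by positivity)] at h2; linarith
  have h0m : 0 < m := by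
    have : (0:ℝ) < (m:ℝ) := by rw [hm']; nlinarith
    exact_mod_cast this
  have h1m : m < 1 := by
    have : (m:ℝ) < 1 := by rw [hm']; nlinarith
    exact_mod_cast this
  omega

/-- Near a rational point with denominator `q`, the Weyl discrepancy at a suitable
length `N` is at least `N/(4q)`. -/
lemma key_lower (d : ℕ) (hd : 1 ≤ d) (q : ℕ) (hq : 1 ≤ q) (a : Fin d → ℤ) (N : ℕ) (hN : 1 ≤ N)
    (y : Fin d → ℝ) (hy : ∀ j, |y j - (a j : ℝ)/q| ≤ 1/(8*q*d*(N:ℝ)^d)) :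
    1/(4*(q:ℝ)) * N ≤ weylDiscrepancy d y N := by
  have hq0 : (0:ℝ) < q := by exact_mod_cast hq
  have hd0 : (0:ℝ) < d := by exact_mod_cast hd
  have hN0 : (0:ℝ) < N := by exact_mod_cast hN
  have hNd : (0:ℝ) < (N:ℝ)^d := by positivity
  have key : (5/(8*(q:ℝ)) - 3/(8*(q:ℝ))) * N ≤ weylDiscrepancy d y N := by
    apply disc_lower
    · positivity
    · rw [div_lt_div_iff₀ (by positivity) (by positivity)]; nlinarith
    · rw [div_le_one (by positivity)]
      have hq1R : (1:ℝ) ≤ q := by exact_mod_cast hq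
      linarith
    · intro n hn
      rw [Finset.mem_Icc] at hn
      have hn1 : 1 ≤ n := hn.1
      have hnN : n ≤ N := hn.2
      set e : ℝ := ∑ j : Fin d, (y j - (a j : ℝ)/q) * (n:ℝ)^((j:ℕ)+1) with hedef
      set k : ℤ := ∑ j : Fin d, a j * (n:ℤ)^((j:ℕ)+1) with hkdef
      have ht : ∑ j : Fin d, y j * (n : ℝ) ^ ((j : ℕ) + 1) = (k:ℝ)/q + e := by
        rw [hedef, hkdef]
        push_cast
        rw [Finset.sum_div, ← Finset.sum_add_distrib]
        apply Finset.sum_congr rfl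
        intro j _
        field_simp
        ring
      have hterm : ∀ j : Fin d, |(y j - (a j : ℝ)/q) * (n:ℝ)^((j:ℕ)+1)|
          ≤ 1/(8*q*d*(N:ℝ)^d) * (N:ℝ)^d := by
        intro j
        rw [abs_mul, abs_of_nonneg (by positivity : (0:ℝ) ≤ (n:ℝ)^((j:ℕ)+1))]
        apply mul_le_mul (hy j) _ (by positivity) (by positivity)
        calc (n:ℝ)^((j:ℕ)+1) ≤ (N:ℝ)^((j:ℕ)+1) := by
              apply pow_le_pow_left₀ (by positivity)
              exact_mod_cast hnN
          _ ≤ (N:ℝ)^d := by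
              apply pow_le_pow_right₀ (by exact_mod_cast hN)
              exact j.2
      have he : |e| ≤ 1/(8*(q:ℝ)) := by
        calc |e| ≤ ∑ j : Fin d, |(y j - (a j : ℝ)/q) * (n:ℝ)^((j:ℕ)+1)| :=
              Finset.abs_sum_le_sum_abs _ _
          _ ≤ ∑ _j : Fin d, 1/(8*q*d*(N:ℝ)^d) * (N:ℝ)^d :=
              Finset.sum_le_sum (fun j _ => hterm j)
          _ = d * (1/(8*q*d*(N:ℝ)^d) * (N:ℝ)^d) := by
              rw [Finset.sum_const, Finset.card_univ, Fintype.card_fin, nsmul_eq_mul]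
          _ = 1/(8*(q:ℝ)) := by field_simp
      exact fract_avoid hq ht he
  calc 1/(4*(q:ℝ)) * N = (5/(8*(q:ℝ)) - 3/(8*(q:ℝ))) * N := by ring
    _ ≤ weylDiscrepancy d y N := key

/-- For `0 < α < 1` and `d ≥ 2`, the complement `[0,1)^d \ D_{α,d}` is meagre. -/
theorem stmt8 (d : ℕ) (hd : 2 ≤ d) (α : ℝ) (hα0 : 0 < α) (hα1 : α < 1) :
    IsMeagre ((Set.univ.pi fun _ : Fin d => Set.Ico (0 : ℝ) 1) \ discSet d α) := by
  set F : ℕ → Set (Fin d → ℝ) :=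
    fun M => {x | ∀ N, M ≤ N → weylDiscrepancy d x N < (N:ℝ)^α} with hF
  have hsub : (Set.univ.pi fun _ : Fin d => Set.Ico (0:ℝ) 1) \ discSet d α ⊆ ⋃ M, F M := by
    rintro x ⟨hx1, hx2⟩
    have hcube : ∀ j, x j ∈ Set.Ico (0:ℝ) 1 := fun j => hx1 j (Set.mem_univ j)
    have hnot : ¬ ∃ᶠ N : ℕ in atTop, (N:ℝ)^α ≤ weylDiscrepancy d x N :=
      fun h => hx2 ⟨hcube, h⟩
    rw [not_frequently] at hnot
    simp only [not_le] at hnot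
    obtain ⟨M, hM⟩ := eventually_atTop.1 hnot
    exact Set.mem_iUnion.2 ⟨M, fun N hN => hM N hN⟩
  refine IsMeagre.mono hsub (isMeagre_iUnion fun M => ?_)
  -- Each `F M` is nowhere dense, hence meagre.
  have hnd : IsNowhereDense (F M) := by
    rw [IsNowhereDense, interior_eq_empty_iff_dense_compl, dense_iff_inter_open]
    intro U hU hUne
    obtain ⟨x, hxU⟩ := hUne
    obtain ⟨r, hr, hball⟩ := Metric.isOpen_iff.1 hU x hxU
    -- rational approximation
    obtain ⟨q, hqgt⟩ := exists_nat_gt (max 1 (2/r))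
    have hq1 : 1 ≤ q := by
      have : (1:ℝ) < q := lt_of_le_of_lt (le_max_left _ _) hqgt
      exact_mod_cast this.le
    have hq0 : (0:ℝ) < q := by exact_mod_cast hq1
    have hqr : 1/(q:ℝ) < r/2 := by
      have h2r : 2/r < q := lt_of_le_of_lt (le_max_right _ _) hqgt
      rw [div_lt_div_iff₀ hq0 (by norm_num)]
      rw [div_lt_iff₀ hr] at h2r
      nlinarith
    set z : Fin d → ℝ := fun j => ((⌊x j * q⌋ : ℝ)) / q with hz
    have hzx : ∀ j, |z j - x j| < r/2 := by
      intro j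
      have hfr : x j - z j = Int.fract (x j * q) / q := by
        rw [hz, Int.fract]; field_simp
      have h1 : 0 ≤ Int.fract (x j * q) / q := by
        have := Int.fract_nonneg (x j * q); positivity
      have h2 : Int.fract (x j * q) / q < 1/(q:ℝ) := by
        rw [div_lt_div_iff₀ hq0 hq0]
        have := Int.fract_lt_one (x j * q); nlinarith
      rw [abs_sub_comm, hfr, abs_of_nonneg h1]
      linarith
    have hzU : z ∈ U := by
      apply hball
      rw [Metric.mem_ball, dist_pi_lt_iff hr]
      intro j
      rw [Real.dist_eq]
      linarith [hzx j]
    -- choose a suitable length N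
    have htend : Tendsto (fun N : ℕ => (N:ℝ)^(1-α)) atTop atTop :=
      (tendsto_rpow_atTop (by linarith : (0:ℝ) < 1-α)).comp tendsto_natCast_atTop_atTop
    obtain ⟨N, ⟨⟨hNq, hNM⟩, hN1⟩⟩ :=
      (((htend.eventually_ge_atTop (4*(q:ℝ))).and (eventually_ge_atTop M)).and
        (eventually_ge_atTop 1)).exists
    have hN0 : (0:ℝ) < N := by exact_mod_cast hN1
    have hd1 : 1 ≤ d := by omega
    have hd0 : (0:ℝ) < d := by exact_mod_cast hd1
    have hNd : (0:ℝ) < (N:ℝ)^d := by positivity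
    set δ : ℝ := 1/(8*q*d*(N:ℝ)^d) with hδ
    have hδ0 : 0 < δ := by positivity
    -- z is not in the closure of F M
    refine ⟨z, hzU, ?_⟩
    intro hzc
    rw [Metric.mem_closure_iff] at hzc
    obtain ⟨y, hyF, hyd⟩ := hzc δ hδ0
    have hy : ∀ j, |y j - ((⌊x j * q⌋ : ℝ))/q| ≤ δ := by
      intro j
      have := dist_le_pi_dist z y j
      rw [Real.dist_eq] at this
      have : |y j - z j| ≤ dist z y := by rwa [abs_sub_comm]
      linarith
    have hkey := key_lower d hd1 q hq1 (fun j => ⌊x j * q⌋) N hN1 y hy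
    have hle : (N:ℝ)^α ≤ 1/(4*(q:ℝ)) * N := by
      have h1 : (N:ℝ)^α * (4*(q:ℝ)) ≤ (N:ℝ)^α * (N:ℝ)^(1-α) :=
        mul_le_mul_of_nonneg_left hNq (Real.rpow_nonneg hN0.le _)
      rw [← Real.rpow_add hN0, add_sub_cancel, Real.rpow_one] at h1
      rw [one_div, inv_mul_eq_div, le_div_iff₀ (by positivity)]
      exact h1
    have := hyF N hNM
    have : weylDiscrepancy d y N < weylDiscrepancy d y N :=
      lt_of_lt_of_le (lt_of_lt_of_le this hle) hkey
    exact lt_irrefl _ this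
  rw [isMeagre_iff_countable_union_isNowhereDense]
  exact ⟨{F M}, by simpa using hnd, Set.countable_singleton _, by simp⟩
end

section
/- Let d ≥ 2 be an integer, γ > 0, τ > 0, p a prime, and a = (a_1, …, a_d) ∈ F_p^d with |T_{d,p}(a)| ≥ γ √p. Suppose x = (x_1, …, x_d) ∈ [0,1)^d satisfies max_{1≤j≤d} |x_j − a_j/p| < p^{−τ}. If N is a positive integer with p | N and p ≤ N ≤ 0.25 · γ^{1/d} · p^{(2τ−1)/(2d)}, then |S_d(x; N)| ≥ 0.25 · γ · N · p^{−1/2}. -/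
open Filter

/-- The complete rational sum `T_{d,p}(a) = ∑_{n=1}^{p} e_p(a_1 n + … + a_d n^d)`,
for `a ∈ F_p^d` identified with `{0,…,p-1}^d`. -/
noncomputable def ratSum (d : ℕ) (p : ℕ) (a : Fin d → ℕ) : ℂ :=
  ∑ n ∈ Finset.Icc 1 p,
    Complex.exp (2 * (Real.pi : ℂ) * Complex.I *
      (((∑ j : Fin d, (a j : ℝ) * (n : ℝ) ^ ((j : ℕ) + 1)) / p : ℝ) : ℂ))

open Complex in
lemma aux_exp_sub_one (θ : ℝ) :
    ‖Complex.exp ((θ : ℂ) * Complex.I) - 1‖ ≤ |θ| := by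
  rw [Complex.exp_mul_I]
  have h : Complex.cos θ + Complex.sin θ * I - 1
      = ((Real.cos θ - 1 : ℝ) : ℂ) + ((Real.sin θ : ℝ) : ℂ) * I := by
    push_cast; ring
  rw [h, Complex.norm_add_mul_I]
  have hs : Real.sin θ ^ 2 + Real.cos θ ^ 2 = 1 := Real.sin_sq_add_cos_sq θ
  have hh : Real.sin (θ/2) ^ 2 = 1/2 - Real.cos (2*(θ/2))/2 := Real.sin_sq_eq_half_sub (θ/2)
  rw [show 2*(θ/2) = θ by ring] at hh
  have key : (Real.cos θ - 1) ^ 2 + Real.sin θ ^ 2 = (2 * |Real.sin (θ/2)|) ^ 2 := by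
    rw [mul_pow, _root_.sq_abs]; nlinarith
  rw [key, Real.sqrt_sq (by positivity)]
  have := Real.abs_sin_le_abs (x := θ/2)
  rw [abs_div] at this
  norm_num at this ⊢
  linarith

/-- `|e(s) - e(t)| ≤ 2π|s-t|` for real `s,t`. -/
lemma aux_exp_diff (s t : ℝ) :
    ‖Complex.exp (2 * (Real.pi : ℂ) * Complex.I * (s : ℂ))
      - Complex.exp (2 * (Real.pi : ℂ) * Complex.I * (t : ℂ))‖
      ≤ 2 * Real.pi * |s - t| := by
  have h1 : Complex.exp (2 * (Real.pi : ℂ) * Complex.I * (s : ℂ))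
      - Complex.exp (2 * (Real.pi : ℂ) * Complex.I * (t : ℂ))
      = Complex.exp (2 * (Real.pi : ℂ) * Complex.I * (t : ℂ)) *
        (Complex.exp (((2 * Real.pi * (s - t) : ℝ) : ℂ) * Complex.I) - 1) := by
    rw [mul_sub, ← Complex.exp_add, mul_one]
    push_cast
    ring_nf
  rw [h1, norm_mul]
  have h2 : ‖Complex.exp (2 * (Real.pi : ℂ) * Complex.I * (t : ℂ))‖ = 1 := by
    rw [Complex.norm_exp]
    norm_num [Complex.mul_re, Complex.mul_im]
  rw [h2, one_mul]
  calc ‖_‖ ≤ |2 * Real.pi * (s - t)| := aux_exp_sub_one _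
    _ = 2 * Real.pi * |s - t| := by
        rw [abs_mul, abs_of_nonneg (by positivity : (0:ℝ) ≤ 2 * Real.pi)]

lemma aux_shift_sum (f : ℕ → ℂ) (c p : ℕ) :
    ∑ n ∈ Finset.Ioc c (c + p), f n = ∑ n ∈ Finset.Ioc 0 p, f (n + c) := by
  have h := Finset.map_add_right_Ioc 0 p c
  rw [zero_add] at h
  rw [show c + p = p + c by ring, ← h, Finset.sum_map]
  simp [addRightEmbedding]

lemma aux_periodic_sum (p : ℕ) (f : ℕ → ℂ) (hf : ∀ n, f (n + p) = f n) (K : ℕ) :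
    ∑ n ∈ Finset.Icc 1 (K * p), f n = K * ∑ n ∈ Finset.Icc 1 p, f n := by
  have hshift : ∀ k n, f (n + k * p) = f n := by
    intro k
    induction k with
    | zero => simp
    | succ m ih => intro n; rw [Nat.succ_mul, ← Nat.add_assoc, hf, ih]
  have h0 : ∀ m, Finset.Icc 1 m = Finset.Ioc 0 m := fun m => by
    exact Finset.Icc_add_one_left_eq_Ioc 0 m
  induction K with
  | zero => simp
  | succ k ih =>
    rw [h0] at ih ⊢
    rw [← Finset.sum_Ioc_consecutive f (Nat.zero_le (k * p))
        (by rw [Nat.succ_mul]; omega), ih]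
    rw [show (k+1) * p = k * p + p by ring, aux_shift_sum]
    have : ∑ n ∈ Finset.Ioc 0 p, f (n + k * p) = ∑ n ∈ Finset.Ioc 0 p, f n :=
      Finset.sum_congr rfl fun n _ => hshift k n
    rw [this, ← h0]
    push_cast
    ring

lemma aux_main (d p : ℕ) (hp : 0 < p) (a : Fin d → ℕ) (K : ℕ) :
    weylSum d (fun j => (a j : ℝ) / p) (K * p) = K * ratSum d p a := by
  set f : ℕ → ℂ := fun n => Complex.exp (2 * (Real.pi : ℂ) * Complex.I *
      (((∑ j : Fin d, (a j : ℝ) * (n : ℝ) ^ ((j : ℕ) + 1)) / p : ℝ) : ℂ)) with hfdef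
  have hrat : ratSum d p a = ∑ n ∈ Finset.Icc 1 p, f n := rfl
  have hweyl : weylSum d (fun j => (a j : ℝ) / p) (K * p)
      = ∑ n ∈ Finset.Icc 1 (K * p), f n := by
    unfold weylSum
    refine Finset.sum_congr rfl fun n _ => ?_
    rw [hfdef]
    congr 1
    rw [Finset.sum_div]
    push_cast
    congr 1
    exact Finset.sum_congr rfl fun j _ => by ring
  have hcast : ∀ m : ℕ, (∑ j : Fin d, (a j : ℝ) * (m : ℝ) ^ ((j : ℕ) + 1))
      = ((∑ j : Fin d, a j * m ^ ((j : ℕ) + 1) : ℕ) : ℝ) := by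
    intro m; push_cast; rfl
  set A : ℕ → ℕ := fun m => ∑ j : Fin d, a j * m ^ ((j : ℕ) + 1) with hAdef
  have hper : ∀ n, f (n + p) = f n := by
    intro n
    have hdvd : (p : ℤ) ∣ (A (n + p) : ℤ) - (A n : ℤ) := by
      rw [← ZMod.intCast_zmod_eq_zero_iff_dvd]
      push_cast [hAdef]
      simp [ZMod.natCast_self]
    obtain ⟨m, hm⟩ := hdvd
    have hAr : ((A (n + p) : ℝ)) = (A n : ℝ) + p * m := by
      have : (A (n + p) : ℤ) = (A n : ℤ) + p * m := by linarith [hm]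
      exact_mod_cast congrArg (Int.cast : ℤ → ℝ) this
    rw [hfdef]
    simp only
    rw [hcast (n + p), hcast n, hAr]
    have hdiv : ((A n : ℝ) + p * m) / p = (A n : ℝ) / p + m := by
      field_simp
    rw [hdiv]
    rw [Complex.ofReal_add, Complex.ofReal_intCast]
    rw [mul_add, Complex.exp_add]
    have : Complex.exp (2 * (Real.pi : ℂ) * Complex.I * (m : ℂ)) = 1 := by
      rw [show 2 * (Real.pi : ℂ) * Complex.I * (m : ℂ)
        = (m : ℂ) * (2 * Real.pi * Complex.I) by ring]
      exact Complex.exp_int_mul_two_pi_mul_I m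
    rw [this, mul_one]
  rw [hweyl, hrat, aux_periodic_sum p f hper K]

lemma aux_perj (d p N : ℕ) (γ τ : ℝ) (hγ : 0 < γ) (hp2 : 2 ≤ p) (hd0 : 0 < d)
    (hNM : (N : ℝ) ≤ 1/4 * γ ^ ((1:ℝ)/(d:ℝ)) * (p : ℝ) ^ ((2*τ-1)/(2*(d:ℝ))))
    (hpN : p ≤ N) (k : ℕ) (hkd : k ≤ d) :
    (p : ℝ) ^ (-τ) * (N : ℝ) ^ k
      ≤ γ * (p : ℝ) ^ (-(1:ℝ)/2) * ((4:ℝ) ^ (-(d:ℝ)) * (2:ℝ) ^ ((k:ℝ)-(d:ℝ))) := by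
  set P := (p : ℝ) with hPdef
  have hP2 : (2:ℝ) ≤ P := by rw [hPdef]; exact_mod_cast hp2
  have hP0 : (0:ℝ) < P := by linarith
  set e := (2*τ-1)/(2*(d:ℝ)) with he
  set g := γ ^ ((1:ℝ)/(d:ℝ)) with hg
  have hg0 : 0 < g := Real.rpow_pos_of_pos hγ _
  have hPe0 : (0:ℝ) < P ^ e := Real.rpow_pos_of_pos hP0 _
  have hN0 : (0:ℝ) ≤ (N:ℝ) := Nat.cast_nonneg N
  have hPN : P ≤ (N:ℝ) := by rw [hPdef]; exact_mod_cast hpN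
  have hd0' : ((d:ℝ)) ≠ 0 := by positivity
  have hkd' : (k:ℝ) - (d:ℝ) ≤ 0 := by
    have : (k:ℝ) ≤ (d:ℝ) := by exact_mod_cast hkd
    linarith
  have hLg : 4 * P ^ ((1:ℝ)-e) ≤ g := by
    rw [Real.rpow_sub hP0, Real.rpow_one, mul_div_assoc']
    rw [div_le_iff₀ hPe0]
    nlinarith [hNM, hPN, hPe0]
  have hL0 : (0:ℝ) < 4 * P ^ ((1:ℝ)-e) := by positivity
  have h1 : (N:ℝ) ^ k ≤ (1/4 * g * P ^ e) ^ (k:ℝ) := by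
    rw [← Real.rpow_natCast (N:ℝ) k]
    exact Real.rpow_le_rpow hN0 hNM (Nat.cast_nonneg k)
  have h2 : (1/4 * g * P ^ e) ^ (k:ℝ)
      = (1/4:ℝ) ^ (k:ℝ) * g ^ (k:ℝ) * P ^ (e*(k:ℝ)) := by
    rw [Real.mul_rpow (by positivity) hPe0.le, Real.mul_rpow (by norm_num) hg0.le,
      Real.rpow_mul hP0.le]
  have h3 : g ^ (k:ℝ) = γ * g ^ ((k:ℝ)-(d:ℝ)) := by
    rw [show (k:ℝ) = (d:ℝ) + ((k:ℝ)-(d:ℝ)) by ring, Real.rpow_add hg0]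
    congr 1
    · rw [hg, ← Real.rpow_mul hγ.le, one_div, inv_mul_cancel₀ hd0', Real.rpow_one]
    · congr 1; push_cast; ring
  have h4 : g ^ ((k:ℝ)-(d:ℝ)) ≤ (4 * P ^ ((1:ℝ)-e)) ^ ((k:ℝ)-(d:ℝ)) :=
    Real.rpow_le_rpow_of_nonpos hL0 hLg hkd'
  have h5 : (4 * P ^ ((1:ℝ)-e)) ^ ((k:ℝ)-(d:ℝ))
      = (4:ℝ) ^ ((k:ℝ)-(d:ℝ)) * P ^ (((1:ℝ)-e)*((k:ℝ)-(d:ℝ))) := by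
    rw [Real.mul_rpow (by norm_num) (Real.rpow_pos_of_pos hP0 _).le,
      Real.rpow_mul hP0.le]
  have hNk : (N:ℝ) ^ k ≤ (1/4:ℝ) ^ (k:ℝ) * (γ * ((4:ℝ) ^ ((k:ℝ)-(d:ℝ))
      * P ^ (((1:ℝ)-e)*((k:ℝ)-(d:ℝ))))) * P ^ (e*(k:ℝ)) := by
    calc (N:ℝ) ^ k ≤ (1/4 * g * P ^ e) ^ (k:ℝ) := h1
      _ = (1/4:ℝ) ^ (k:ℝ) * (γ * g ^ ((k:ℝ)-(d:ℝ))) * P ^ (e*(k:ℝ)) := by rw [h2, h3]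
      _ ≤ _ := by
          rw [h5] at h4
          have h14 : (0:ℝ) ≤ (1/4:ℝ) ^ (k:ℝ) := by positivity
          have hPek : (0:ℝ) ≤ P ^ (e*(k:ℝ)) := (Real.rpow_pos_of_pos hP0 _).le
          exact mul_le_mul_of_nonneg_right
            (mul_le_mul_of_nonneg_left (mul_le_mul_of_nonneg_left h4 hγ.le) h14) hPek
  have hA : (1/4:ℝ) ^ (k:ℝ) * (4:ℝ) ^ ((k:ℝ)-(d:ℝ)) = (4:ℝ) ^ (-(d:ℝ)) := by
    rw [one_div, Real.inv_rpow (by norm_num : (0:ℝ) ≤ 4),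
      ← Real.rpow_neg (by norm_num : (0:ℝ) ≤ 4),
      ← Real.rpow_add (by norm_num : (0:ℝ) < 4)]
    congr 1; ring
  have hB : P ^ (-τ) * (P ^ (((1:ℝ)-e)*((k:ℝ)-(d:ℝ))) * P ^ (e*(k:ℝ)))
      = P ^ (((k:ℝ)-(d:ℝ)) + (-(1:ℝ)/2)) := by
    rw [← Real.rpow_add hP0, ← Real.rpow_add hP0]
    congr 1
    rw [he]
    field_simp
    ring
  have hC : P ^ (((k:ℝ)-(d:ℝ)) + (-(1:ℝ)/2)) = P ^ ((k:ℝ)-(d:ℝ)) * P ^ (-(1:ℝ)/2) :=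
    Real.rpow_add hP0 _ _
  have hD : P ^ ((k:ℝ)-(d:ℝ)) ≤ (2:ℝ) ^ ((k:ℝ)-(d:ℝ)) :=
    Real.rpow_le_rpow_of_nonpos two_pos hP2 hkd'
  have hPt0 : (0:ℝ) < P ^ (-τ) := Real.rpow_pos_of_pos hP0 _
  calc P ^ (-τ) * (N:ℝ) ^ k
      ≤ P ^ (-τ) * ((1/4:ℝ) ^ (k:ℝ) * (γ * ((4:ℝ) ^ ((k:ℝ)-(d:ℝ))
        * P ^ (((1:ℝ)-e)*((k:ℝ)-(d:ℝ))))) * P ^ (e*(k:ℝ))) :=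
        mul_le_mul_of_nonneg_left hNk hPt0.le
    _ = γ * ((1/4:ℝ) ^ (k:ℝ) * (4:ℝ) ^ ((k:ℝ)-(d:ℝ)))
        * (P ^ (-τ) * (P ^ (((1:ℝ)-e)*((k:ℝ)-(d:ℝ))) * P ^ (e*(k:ℝ)))) := by ring
    _ = γ * (4:ℝ) ^ (-(d:ℝ)) * (P ^ ((k:ℝ)-(d:ℝ)) * P ^ (-(1:ℝ)/2)) := by
        rw [hA, hB, hC]
    _ ≤ γ * (4:ℝ) ^ (-(d:ℝ)) * ((2:ℝ) ^ ((k:ℝ)-(d:ℝ)) * P ^ (-(1:ℝ)/2)) := by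
        have hPh : (0:ℝ) ≤ P ^ (-(1:ℝ)/2) := (Real.rpow_pos_of_pos hP0 _).le
        exact mul_le_mul_of_nonneg_left (mul_le_mul_of_nonneg_right hD hPh)
          (by positivity : (0:ℝ) ≤ γ * (4:ℝ) ^ (-(d:ℝ)))
    _ = γ * P ^ (-(1:ℝ)/2) * ((4:ℝ) ^ (-(d:ℝ)) * (2:ℝ) ^ ((k:ℝ)-(d:ℝ))) := by ring

lemma aux_ind (d : ℕ) (hd : 2 ≤ d) : (64:ℝ)*(2^d-1) ≤ 3*8^d := by
  induction d, hd using Nat.le_induction with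
  | base => norm_num
  | succ n hn ih =>
    have h8 : (64:ℝ) ≤ 8^n := by
      calc (64:ℝ) = 8^2 := by norm_num
        _ ≤ 8^n := pow_le_pow_right₀ (by norm_num) hn
    rw [pow_succ, pow_succ]
    nlinarith [ih, h8]

lemma aux_geo (d : ℕ) (hd : 2 ≤ d) :
    ∑ j : Fin d, (4:ℝ)^(-(d:ℝ)) * (2:ℝ)^(((((j:ℕ)+1 : ℕ)):ℝ)-(d:ℝ)) ≤ 3/32 := by
  have h4 : (4:ℝ)^(-(d:ℝ)) = ((4:ℝ)^d)⁻¹ := by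
    rw [Real.rpow_neg (by norm_num), Real.rpow_natCast]
  have h2 : ∀ j : Fin d, (2:ℝ)^(((((j:ℕ)+1 : ℕ)):ℝ)-(d:ℝ)) = (2:ℝ)^((j:ℕ)+1) / (2:ℝ)^d := by
    intro j
    rw [Real.rpow_sub two_pos, Real.rpow_natCast, Real.rpow_natCast]
  simp_rw [h4, h2]
  rw [← Finset.mul_sum]
  have hsum : ∑ j : Fin d, (2:ℝ)^((j:ℕ)+1) / (2:ℝ)^d = (2*((2:ℝ)^d-1))/2^d := by
    rw [← Finset.sum_div]
    congr 1
    rw [Fin.sum_univ_eq_sum_range (fun i => (2:ℝ)^(i+1))]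
    have hh : ∀ i, (2:ℝ)^(i+1) = 2 * 2^i := fun i => by ring
    simp_rw [hh]
    rw [← Finset.mul_sum, geom_sum_eq (by norm_num : (2:ℝ) ≠ 1) d]
    norm_num
  rw [hsum, inv_mul_eq_div, div_div, div_le_div_iff₀ (by positivity) (by norm_num)]
  have h8 : (4:ℝ)^d * 2^d = 8^d := by rw [← mul_pow]; norm_num
  nlinarith [aux_ind d hd, h8]

/-- If `|T_{d,p}(a)| ≥ γ √p`, `x ∈ [0,1)^d` is within `p^{-τ}` of `a/p` in each
coordinate, `p ∣ N` and `p ≤ N ≤ 0.25 γ^{1/d} p^{(2τ-1)/(2d)}`, then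
`|S_d(x;N)| ≥ 0.25 γ N p^{-1/2}`. -/
theorem stmt14 (d : ℕ) (hd : 2 ≤ d) (γ τ : ℝ) (hγ : 0 < γ) (hτ : 0 < τ)
    (p : ℕ) (hp : p.Prime) (a : Fin d → ℕ) (ha : ∀ j, a j < p)
    (hT : γ * Real.sqrt p ≤ ‖ratSum d p a‖)
    (x : Fin d → ℝ) (hx01 : ∀ j, x j ∈ Set.Ico (0 : ℝ) 1)
    (hx : ∀ j, |x j - (a j : ℝ) / p| < (p : ℝ) ^ (-τ))
    (N : ℕ) (hN0 : 0 < N) (hpN : p ∣ N) (hNlow : p ≤ N)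
    (hNup : (N : ℝ) ≤ 0.25 * γ ^ ((1 : ℝ) / (d : ℝ)) * (p : ℝ) ^ ((2 * τ - 1) / (2 * (d : ℝ)))) :
    0.25 * γ * (N : ℝ) * (p : ℝ) ^ (-(1 : ℝ) / 2) ≤ ‖weylSum d x N‖ := by
  have hp2 : 2 ≤ p := hp.two_le
  have hP0 : (0:ℝ) < p := by positivity
  have hd0 : 0 < d := by omega
  have hNM : (N : ℝ) ≤ 1/4 * γ ^ ((1:ℝ)/(d:ℝ)) * (p : ℝ) ^ ((2*τ-1)/(2*(d:ℝ))) := by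
    rw [show (1/4 : ℝ) = 0.25 by norm_num]
    exact hNup
  set Q := (p:ℝ) ^ (-(1:ℝ)/2) with hQdef
  have hQ0 : 0 < Q := Real.rpow_pos_of_pos hP0 _
  -- the main term
  obtain ⟨K, hK⟩ := hpN
  have hKN : N = K * p := by rw [hK]; ring
  set xa : Fin d → ℝ := fun j => (a j : ℝ) / p with hxad
  have hmain : weylSum d xa N = (K : ℂ) * ratSum d p a := by
    rw [hKN]; exact aux_main d p (by omega) a K
  have hsqrt : Real.sqrt p = (p:ℝ) ^ ((1:ℝ)/2) := by
    rw [Real.sqrt_eq_rpow]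
  have hpQ : (p:ℝ) * Q = (p:ℝ) ^ ((1:ℝ)/2) := by
    rw [hQdef, ← Real.rpow_one (p:ℝ)]
    rw [show ((p:ℝ) ^ (1:ℝ)) ^ (-(1:ℝ)/2) = (p:ℝ) ^ (-(1:ℝ)/2) by rw [Real.rpow_one]]
    rw [← Real.rpow_add hP0]
    norm_num
  have hmain_lb : γ * (N:ℝ) * Q ≤ ‖weylSum d xa N‖ := by
    rw [hmain, norm_mul, Complex.norm_natCast]
    have hK0 : (0:ℝ) ≤ (K:ℝ) := Nat.cast_nonneg K
    calc γ * (N:ℝ) * Q = (K:ℝ) * (γ * ((p:ℝ) * Q)) := by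
          rw [hKN]; push_cast; ring
      _ = (K:ℝ) * (γ * Real.sqrt p) := by rw [hpQ, hsqrt]
      _ ≤ (K:ℝ) * ‖ratSum d p a‖ := by
          exact mul_le_mul_of_nonneg_left hT hK0
  -- the perturbation bound
  set Φ := ∑ j : Fin d, (p:ℝ)^(-τ) * (N:ℝ)^((j:ℕ)+1) with hΦdef
  have hΦ_lb : Φ ≤ 3/32 * (γ * Q) := by
    have hterm : ∀ j : Fin d, (p:ℝ)^(-τ) * (N:ℝ)^((j:ℕ)+1)
        ≤ γ * Q * ((4:ℝ)^(-(d:ℝ)) * (2:ℝ)^(((((j:ℕ)+1:ℕ)):ℝ)-(d:ℝ))) := by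
      intro j
      exact aux_perj d p N γ τ hγ hp2 hd0 hNM hNlow ((j:ℕ)+1) j.isLt
    calc Φ ≤ ∑ j : Fin d, γ * Q * ((4:ℝ)^(-(d:ℝ)) * (2:ℝ)^(((((j:ℕ)+1:ℕ)):ℝ)-(d:ℝ))) :=
          Finset.sum_le_sum fun j _ => hterm j
      _ = γ * Q * ∑ j : Fin d, (4:ℝ)^(-(d:ℝ)) * (2:ℝ)^(((((j:ℕ)+1:ℕ)):ℝ)-(d:ℝ)) := by
          rw [Finset.mul_sum]
      _ ≤ γ * Q * (3/32) := by
          exact mul_le_mul_of_nonneg_left (aux_geo d hd) (by positivity)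
      _ = 3/32 * (γ * Q) := by ring
  have hΦ0 : 0 ≤ Φ := by
    apply Finset.sum_nonneg
    intro j _
    positivity
  -- difference bound
  have hdiff : ‖weylSum d x N - weylSum d xa N‖ ≤ (N:ℝ) * (2 * Real.pi * Φ) := by
    unfold weylSum
    rw [← Finset.sum_sub_distrib]
    calc ‖_‖ ≤ ∑ n ∈ Finset.Icc 1 N, ‖
          (Complex.exp (2 * (Real.pi : ℂ) * Complex.I *
            ∑ j : Fin d, (x j : ℂ) * (n : ℂ) ^ ((j : ℕ) + 1))
          - Complex.exp (2 * (Real.pi : ℂ) * Complex.I *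
            ∑ j : Fin d, (xa j : ℂ) * (n : ℂ) ^ ((j : ℕ) + 1)))‖ :=
          norm_sum_le _ _
      _ ≤ ∑ n ∈ Finset.Icc 1 N, 2 * Real.pi * Φ := by
          apply Finset.sum_le_sum
          intro n hn
          have hnN : n ≤ N := (Finset.mem_Icc.mp hn).2
          have hc : ∀ (y : Fin d → ℝ), (∑ j : Fin d, (y j : ℂ) * (n : ℂ) ^ ((j : ℕ) + 1))
              = (((∑ j : Fin d, y j * (n:ℝ) ^ ((j : ℕ) + 1)) : ℝ) : ℂ) := by
            intro y; push_cast; rfl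
          rw [hc x, hc xa]
          refine le_trans (aux_exp_diff _ _) ?_
          have habs : |(∑ j : Fin d, x j * (n:ℝ) ^ ((j : ℕ) + 1))
              - ∑ j : Fin d, xa j * (n:ℝ) ^ ((j : ℕ) + 1)| ≤ Φ := by
            rw [← Finset.sum_sub_distrib]
            calc |∑ j : Fin d, (x j * (n:ℝ) ^ ((j : ℕ) + 1)
                  - xa j * (n:ℝ) ^ ((j : ℕ) + 1))|
                ≤ ∑ j : Fin d, |x j * (n:ℝ) ^ ((j : ℕ) + 1)
                  - xa j * (n:ℝ) ^ ((j : ℕ) + 1)| := Finset.abs_sum_le_sum_abs _ _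
              _ ≤ Φ := by
                  apply Finset.sum_le_sum
                  intro j _
                  rw [show x j * (n:ℝ) ^ ((j : ℕ) + 1) - xa j * (n:ℝ) ^ ((j : ℕ) + 1)
                    = (x j - xa j) * (n:ℝ) ^ ((j : ℕ) + 1) by ring, abs_mul,
                    abs_of_nonneg (by positivity : (0:ℝ) ≤ (n:ℝ) ^ ((j : ℕ) + 1))]
                  have h1 : |x j - xa j| ≤ (p:ℝ)^(-τ) := (hx j).le
                  have h2 : (n:ℝ) ^ ((j : ℕ) + 1) ≤ (N:ℝ) ^ ((j : ℕ) + 1) := by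
                    apply pow_le_pow_left₀ (by positivity)
                    exact_mod_cast hnN
                  exact mul_le_mul h1 h2 (by positivity) (by positivity)
          have hπ0 : (0:ℝ) ≤ 2 * Real.pi := by positivity
          exact mul_le_mul_of_nonneg_left habs hπ0
      _ ≤ (N:ℝ) * (2 * Real.pi * Φ) := by
          apply le_of_eq
          rw [Finset.sum_const, Nat.card_Icc]
          simp [nsmul_eq_mul]
  -- assemble
  have hπ4 : Real.pi ≤ 4 := Real.pi_le_four
  have hπ0 : 0 < Real.pi := Real.pi_pos
  have hN0' : (0:ℝ) ≤ (N:ℝ) := Nat.cast_nonneg N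
  have herr : (N:ℝ) * (2 * Real.pi * Φ) ≤ 3/4 * (γ * (N:ℝ) * Q) := by
    have h1 : 2 * Real.pi * Φ ≤ 2 * 4 * (3/32 * (γ * Q)) := by
      have := mul_le_mul_of_nonneg_left hΦ_lb (by positivity : (0:ℝ) ≤ 2 * Real.pi)
      nlinarith [hγ.le, hQ0.le, hΦ0]
    calc (N:ℝ) * (2 * Real.pi * Φ) ≤ (N:ℝ) * (2 * 4 * (3/32 * (γ * Q))) :=
          mul_le_mul_of_nonneg_left h1 hN0'
      _ = 3/4 * (γ * (N:ℝ) * Q) := by ring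
  have htri : ‖weylSum d xa N‖
      ≤ ‖weylSum d x N‖ + ‖weylSum d x N - weylSum d xa N‖ := by
    have h := norm_sub_norm_le (weylSum d xa N) (weylSum d x N)
    rw [norm_sub_rev] at h
    simpa [add_comm] using h
  have : γ * (N:ℝ) * Q - 3/4 * (γ * (N:ℝ) * Q) ≤ ‖weylSum d x N‖ := by
    linarith [hmain_lb, hdiff, herr, htri]
  calc 0.25 * γ * (N:ℝ) * (p:ℝ) ^ (-(1:ℝ)/2)
      = γ * (N:ℝ) * Q - 3/4 * (γ * (N:ℝ) * Q) := by rw [hQdef]; ring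
    _ ≤ ‖weylSum d x N‖ := this
end
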